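/- arXiv:2509.14112 — 5 statements merged into one kernel-verified Lean document; each statement's English description precedes it below -/
import Mathlib

section
/- Let M be a finite Markov chain with state space partitioned into absorbing targets F, absorbing sinks Z, and unknown states S?. Suppose for some k ≥ 1, for every s ∈ S?, the probability of staying in S? for k steps satisfies P_s(□^{≤k} S?) < 1. Then for every s ∈ S?, the reachability value V(s) = P_s(◇F) satisfies P_s(◇^{≤k} F) + P_s(□^{≤k} S?)·l_k ≤ V(s) ≤ P_s(◇^{≤k} F) + P_s(□^{≤k} S?)·u_k, where l_k = min_{s'∈S?} P_{s'}(◇^{≤k}F)/(1-P_{s'}(□^{≤k}S?)) and u_k = max_{s'∈S?} P_{s'}(◇^{≤k}F)/(1-P_{s'}(□^{≤k}S?)). -/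
/-- `mcReach P F Z k s` : probability of reaching `F` within `k` steps from `s`
in the Markov chain with transition matrix `P` (absorbing target set `F`, sink set `Z`). -/
noncomputable def mcReach {S : Type} [Fintype S] [DecidableEq S]
    (P : S → S → ℝ) (F Z : Finset S) : ℕ → S → ℝ
  | 0, s => if s ∈ F then 1 else 0
  | k + 1, s =>
      if s ∈ F then 1
      else if s ∈ Z then 0
      else ∑ s' : S, P s s' * mcReach P F Z k s'

/-- `mcStay P SQ k s` : probability of remaining in the unknown set `SQ` during the first
`k` steps, starting from `s`. -/
noncomputable def mcStay {S : Type} [Fintype S] [DecidableEq S]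
    (P : S → S → ℝ) (SQ : Finset S) : ℕ → S → ℝ
  | 0, s => if s ∈ SQ then 1 else 0
  | k + 1, s => if s ∈ SQ then ∑ s' : S, P s s' * mcStay P SQ k s' else 0

/-- Theorem 1 (sound value iteration for Markov chains): if after `k ≥ 1` steps every
unknown state has staying probability `< 1`, then the value `V` is bracketed by
`reach_k + stay_k·l_k` and `reach_k + stay_k·u_k`, where `l_k`/`u_k` are the min/max over
unknown states of the geometric closed form `reach_k/(1-stay_k)`.
The value `V` is characterized as the (here unique) bounded fixpoint of the Bellman
equations with boundary conditions `V = 1` on `F` and `V = 0` on `Z`. -/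
theorem stmt5 {S : Type} [Fintype S] [DecidableEq S]
    (P : S → S → ℝ) (F Z SQ : Finset S)
    (hP0 : ∀ s s', 0 ≤ P s s') (hP1 : ∀ s, ∑ s' : S, P s s' = 1)
    (hpart : SQ = Finset.univ \ (F ∪ Z)) (hFZ : Disjoint F Z)
    (hFabs : ∀ s ∈ F, P s s = 1) (hZabs : ∀ s ∈ Z, P s s = 1)
    (V : S → ℝ)
    (hVF : ∀ s ∈ F, V s = 1) (hVZ : ∀ s ∈ Z, V s = 0)
    (hVfix : ∀ s ∈ SQ, V s = ∑ s' : S, P s s' * V s')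
    (hVb : ∀ s, 0 ≤ V s ∧ V s ≤ 1)
    (k : ℕ) (hk : 1 ≤ k) (hne : SQ.Nonempty)
    (hstay : ∀ s ∈ SQ, mcStay P SQ k s < 1) :
    ∀ s ∈ SQ,
      mcReach P F Z k s + mcStay P SQ k s *
          (SQ.inf' hne fun s' => mcReach P F Z k s' / (1 - mcStay P SQ k s')) ≤ V s ∧
      V s ≤ mcReach P F Z k s + mcStay P SQ k s *
          (SQ.sup' hne fun s' => mcReach P F Z k s' / (1 - mcStay P SQ k s')) := by
  have hmem : ∀ s : S, s ∈ SQ ↔ s ∉ F ∧ s ∉ Z := by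
    intro s; subst hpart; simp [Finset.mem_sdiff, Finset.mem_union, not_or]
  have hFSQ : ∀ s ∈ F, s ∉ SQ := fun s hs h => ((hmem s).1 h).1 hs
  have upper : ∀ c : ℝ, (∀ s ∈ SQ, V s ≤ c) →
      ∀ n s, V s ≤ mcReach P F Z n s + mcStay P SQ n s * c := by
    intro c hc n
    induction n with
    | zero =>
      intro s
      by_cases hF : s ∈ F
      · simp [mcReach, mcStay, hF, hFSQ s hF, hVF s hF]
      · by_cases hQ : s ∈ SQ
        · simp only [mcReach, mcStay, hF, hQ, if_true, if_false]
          have := hc s hQ; linarith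
        · have hZ : s ∈ Z := by
            by_contra hZ; exact hQ ((hmem s).2 ⟨hF, hZ⟩)
          simp [mcReach, mcStay, hF, hQ, hVZ s hZ]
    | succ n ih =>
      intro s
      by_cases hF : s ∈ F
      · simp [mcReach, mcStay, hF, hFSQ s hF, hVF s hF]
      · by_cases hQ : s ∈ SQ
        · have hZ : s ∉ Z := ((hmem s).1 hQ).2
          simp only [mcReach, mcStay, hF, hZ, hQ, if_true, if_false]
          rw [hVfix s hQ]
          calc ∑ s' : S, P s s' * V s'
              ≤ ∑ s' : S, P s s' * (mcReach P F Z n s' + mcStay P SQ n s' * c) :=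
                Finset.sum_le_sum fun s' _ =>
                  mul_le_mul_of_nonneg_left (ih s') (hP0 s s')
            _ = (∑ s' : S, P s s' * mcReach P F Z n s') +
                (∑ s' : S, P s s' * mcStay P SQ n s') * c := by
                simp [mul_add, Finset.sum_add_distrib, Finset.sum_mul, mul_assoc]
        · have hZ : s ∈ Z := by
            by_contra hZ; exact hQ ((hmem s).2 ⟨hF, hZ⟩)
          simp [mcReach, mcStay, hF, hZ, hQ, hVZ s hZ]
  have lower : ∀ c : ℝ, (∀ s ∈ SQ, c ≤ V s) →
      ∀ n s, mcReach P F Z n s + mcStay P SQ n s * c ≤ V s := by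
    intro c hc n
    induction n with
    | zero =>
      intro s
      by_cases hF : s ∈ F
      · simp [mcReach, mcStay, hF, hFSQ s hF, hVF s hF]
      · by_cases hQ : s ∈ SQ
        · simp only [mcReach, mcStay, hF, hQ, if_true, if_false]
          have := hc s hQ; linarith
        · have hZ : s ∈ Z := by
            by_contra hZ; exact hQ ((hmem s).2 ⟨hF, hZ⟩)
          simp [mcReach, mcStay, hF, hQ, hVZ s hZ]
    | succ n ih =>
      intro s
      by_cases hF : s ∈ F
      · simp [mcReach, mcStay, hF, hFSQ s hF, hVF s hF]
      · by_cases hQ : s ∈ SQ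
        · have hZ : s ∉ Z := ((hmem s).1 hQ).2
          simp only [mcReach, mcStay, hF, hZ, hQ, if_true, if_false]
          rw [hVfix s hQ]
          calc (∑ s' : S, P s s' * mcReach P F Z n s') +
                (∑ s' : S, P s s' * mcStay P SQ n s') * c
              = ∑ s' : S, P s s' * (mcReach P F Z n s' + mcStay P SQ n s' * c) := by
                simp [mul_add, Finset.sum_add_distrib, Finset.sum_mul, mul_assoc]
            _ ≤ ∑ s' : S, P s s' * V s' :=
                Finset.sum_le_sum fun s' _ =>
                  mul_le_mul_of_nonneg_left (ih s') (hP0 s s')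
        · have hZ : s ∈ Z := by
            by_contra hZ; exact hQ ((hmem s).2 ⟨hF, hZ⟩)
          simp [mcReach, mcStay, hF, hZ, hQ, hVZ s hZ]
  set f : S → ℝ := fun s' => mcReach P F Z k s' / (1 - mcStay P SQ k s') with hf
  intro s hs
  constructor
  · -- lower bound
    obtain ⟨s0, hs0, hs0e⟩ := Finset.exists_mem_eq_inf' hne V
    set m := SQ.inf' hne V with hm
    have h1 := lower m (fun s' h => Finset.inf'_le V h) k s0
    have hpos : 0 < 1 - mcStay P SQ k s0 := by linarith [hstay s0 hs0]
    have h2 : f s0 ≤ m := by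
      rw [hf]
      rw [div_le_iff₀ hpos]
      rw [hs0e] at h1 ⊢
      nlinarith
    have h3 : SQ.inf' hne f ≤ m := le_trans (Finset.inf'_le f hs0) h2
    exact lower _ (fun s' h => le_trans h3 (Finset.inf'_le V h)) k s
  · obtain ⟨s0, hs0, hs0e⟩ := Finset.exists_mem_eq_sup' hne V
    set m := SQ.sup' hne V with hm
    have h1 := upper m (fun s' h => Finset.le_sup' V h) k s0
    have hpos : 0 < 1 - mcStay P SQ k s0 := by linarith [hstay s0 hs0]
    have h2 : m ≤ f s0 := by
      rw [hf, le_div_iff₀ hpos]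
      rw [hs0e] at h1 ⊢
      nlinarith
    have h3 : m ≤ SQ.sup' hne f := le_trans h2 (Finset.le_sup' f hs0)
    exact upper _ (fun s' h => le_trans (Finset.le_sup' V h) h3) k s
end

section
/- In a finite Markov chain with states partitioned into absorbing F, absorbing Z, and S?, the value V(s) = P_s(◇F) decomposes for every k ≥ 0 as V(s) = P_s(◇^{≤k}F) + ∑_{s'∈S?} P_s(stay in S? for exactly k steps and be in s' at step k) · V(s'). Consequently, if l ≤ V(s') ≤ u for all s' ∈ S?, then P_s(◇^{≤k}F) + P_s(□^{≤k}S?)·l ≤ V(s) ≤ P_s(◇^{≤k}F) + P_s(□^{≤k}S?)·u. -/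
/-- `mcStayAt P SQ k s s'` : probability of staying in `SQ` for exactly the first `k` steps
and being at `s'` at step `k`, starting from `s`. -/
noncomputable def mcStayAt {S : Type} [Fintype S] [DecidableEq S]
    (P : S → S → ℝ) (SQ : Finset S) : ℕ → S → S → ℝ
  | 0, s, s' => if s ∈ SQ ∧ s = s' then 1 else 0
  | k + 1, s, s' => if s ∈ SQ then ∑ t : S, P s t * mcStayAt P SQ k t s' else 0

/-- Decomposition lemma underlying SVI: `V(s) = P_s(◇^{≤k}F) + ∑_{s'∈S?} P_s(stay k, at s')·V(s')`,
and consequently any global bounds `l ≤ V ≤ u` on the unknown states yield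
`reach_k + stay_k·l ≤ V ≤ reach_k + stay_k·u`. -/
theorem stmt6 {S : Type} [Fintype S] [DecidableEq S]
    (P : S → S → ℝ) (F Z SQ : Finset S)
    (hP0 : ∀ s s', 0 ≤ P s s') (hP1 : ∀ s, ∑ s' : S, P s s' = 1)
    (hpart : SQ = Finset.univ \ (F ∪ Z)) (hFZ : Disjoint F Z)
    (hFabs : ∀ s ∈ F, P s s = 1) (hZabs : ∀ s ∈ Z, P s s = 1)
    (V : S → ℝ)
    (hVF : ∀ s ∈ F, V s = 1) (hVZ : ∀ s ∈ Z, V s = 0)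
    (hVfix : ∀ s ∈ SQ, V s = ∑ s' : S, P s s' * V s')
    (hVb : ∀ s, 0 ≤ V s ∧ V s ≤ 1) :
    (∀ k : ℕ, ∀ s : S,
      V s = mcReach P F Z k s + ∑ s' ∈ SQ, mcStayAt P SQ k s s' * V s') ∧
    (∀ l u : ℝ, (∀ s' ∈ SQ, l ≤ V s' ∧ V s' ≤ u) →
      ∀ k : ℕ, ∀ s : S,
        mcReach P F Z k s + mcStay P SQ k s * l ≤ V s ∧
        V s ≤ mcReach P F Z k s + mcStay P SQ k s * u) := by
  have hmem : ∀ t : S, t ∈ SQ ↔ (t ∉ F ∧ t ∉ Z) := by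
    intro t
    subst hpart
    simp [Finset.mem_sdiff, Finset.mem_union, not_or]
  have hSA0 : ∀ k (s s' : S), 0 ≤ mcStayAt P SQ k s s' := by
    intro k
    induction k with
    | zero =>
      intro s s'
      simp only [mcStayAt]
      split <;> norm_num
    | succ k ih =>
      intro s s'
      simp only [mcStayAt]
      split
      · exact Finset.sum_nonneg fun t _ => mul_nonneg (hP0 _ _) (ih _ _)
      · exact le_refl 0
  have hstay : ∀ k (s : S), mcStay P SQ k s = ∑ s' ∈ SQ, mcStayAt P SQ k s s' := by
    intro k
    induction k with
    | zero =>
      intro s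
      by_cases hs : s ∈ SQ
      · simp [mcStay, mcStayAt, hs, Finset.sum_ite_eq]
      · simp [mcStay, mcStayAt, hs]
    | succ k ih =>
      intro s
      by_cases hs : s ∈ SQ
      · simp only [mcStay, mcStayAt, if_pos hs]
        calc ∑ t : S, P s t * mcStay P SQ k t
            = ∑ t : S, ∑ s' ∈ SQ, P s t * mcStayAt P SQ k t s' := by
              simp [ih, Finset.mul_sum]
          _ = ∑ s' ∈ SQ, ∑ t : S, P s t * mcStayAt P SQ k t s' := Finset.sum_comm
      · simp [mcStay, mcStayAt, hs]
  have hdec : ∀ k (s : S),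
      V s = mcReach P F Z k s + ∑ s' ∈ SQ, mcStayAt P SQ k s s' * V s' := by
    intro k
    induction k with
    | zero =>
      intro s
      by_cases hF : s ∈ F
      · have hs : s ∉ SQ := fun h => ((hmem s).1 h).1 hF
        simp [mcReach, mcStayAt, hF, hs, hVF s hF]
      · by_cases hZ : s ∈ Z
        · have hs : s ∉ SQ := fun h => ((hmem s).1 h).2 hZ
          simp [mcReach, mcStayAt, hF, hZ, hs, hVZ s hZ]
        · have hs : s ∈ SQ := (hmem s).2 ⟨hF, hZ⟩
          simp [mcReach, mcStayAt, hF, hZ, hs, ite_mul, Finset.sum_ite_eq]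
    | succ k ih =>
      intro s
      by_cases hF : s ∈ F
      · have hs : s ∉ SQ := fun h => ((hmem s).1 h).1 hF
        simp [mcReach, mcStayAt, hF, hs, hVF s hF]
      · by_cases hZ : s ∈ Z
        · have hs : s ∉ SQ := fun h => ((hmem s).1 h).2 hZ
          simp [mcReach, mcStayAt, hF, hZ, hs, hVZ s hZ]
        · have hs : s ∈ SQ := (hmem s).2 ⟨hF, hZ⟩
          rw [hVfix s hs]
          calc ∑ t : S, P s t * V t
              = ∑ t : S, P s t * (mcReach P F Z k t + ∑ s' ∈ SQ, mcStayAt P SQ k t s' * V s') := by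
                exact Finset.sum_congr rfl fun t _ => by rw [← ih t]
            _ = ∑ t : S, (P s t * mcReach P F Z k t
                  + ∑ s' ∈ SQ, P s t * (mcStayAt P SQ k t s' * V s')) := by
                simp [mul_add, Finset.mul_sum]
            _ = (∑ t : S, P s t * mcReach P F Z k t)
                  + ∑ t : S, ∑ s' ∈ SQ, P s t * (mcStayAt P SQ k t s' * V s') :=
                Finset.sum_add_distrib
            _ = (∑ t : S, P s t * mcReach P F Z k t)
                  + ∑ s' ∈ SQ, ∑ t : S, P s t * (mcStayAt P SQ k t s' * V s') := by
                rw [Finset.sum_comm]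
            _ = mcReach P F Z (k + 1) s + ∑ s' ∈ SQ, mcStayAt P SQ (k + 1) s s' * V s' := by
                simp [mcReach, mcStayAt, hF, hZ, hs, Finset.sum_mul, mul_assoc]
  refine ⟨hdec, ?_⟩
  intro l u hlu k s
  have h1 : ∑ s' ∈ SQ, mcStayAt P SQ k s s' * l ≤ ∑ s' ∈ SQ, mcStayAt P SQ k s s' * V s' :=
    Finset.sum_le_sum fun s' hs' =>
      mul_le_mul_of_nonneg_left (hlu s' hs').1 (hSA0 k s s')
  have h2 : ∑ s' ∈ SQ, mcStayAt P SQ k s s' * V s' ≤ ∑ s' ∈ SQ, mcStayAt P SQ k s s' * u :=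
    Finset.sum_le_sum fun s' hs' =>
      mul_le_mul_of_nonneg_left (hlu s' hs').2 (hSA0 k s s')
  have hd := hdec k s
  rw [hstay k s] at *
  constructor
  · rw [Finset.sum_mul] at *
    linarith
  · rw [Finset.sum_mul] at *
    linarith
end

section
/- In a finite turn-based stochastic game with reachability objective ◇F, for any Maximizer strategy σ* optimal for ◇F, any Minimizer strategy τ, any k ≥ 0, and any u ≥ max_{s∈S?} P_s^{σ*,τ}(◇F), it holds for all states s that V(s) ≤ P_s^{σ*,τ}(◇^{≤k}F) + P_s^{σ*,τ}(□^{≤k}S?)·u. -/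
/-- `reachB δ F isMax σ τ k h s` : probability of reaching the target set `F` within `k`
steps in the turn-based stochastic game with transition function `δ`, starting from state
`s` after history `h`, when Maximizer plays the (history-dependent) strategy `σ` and
Minimizer plays `τ`. -/
noncomputable def reachB {S A : Type} [Fintype S] [DecidableEq S]
    (δ : S → A → S → ℝ) (F : Finset S) (isMax : S → Bool)
    (σ τ : List (S × A) → S → A) : ℕ → List (S × A) → S → ℝ
  | 0, _, s => if s ∈ F then 1 else 0
  | k + 1, h, s =>
      if s ∈ F then 1
      else
        ∑ s' : S,
          δ s (if isMax s then σ h s else τ h s) s' *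
            reachB δ F isMax σ τ k (h ++ [(s, if isMax s then σ h s else τ h s)]) s'

/-- `stayB δ SQ isMax σ τ k h s` : probability that the play remains in the unknown set
`SQ` during the first `k` steps. -/
noncomputable def stayB {S A : Type} [Fintype S] [DecidableEq S]
    (δ : S → A → S → ℝ) (SQ : Finset S) (isMax : S → Bool)
    (σ τ : List (S × A) → S → A) : ℕ → List (S × A) → S → ℝ
  | 0, _, s => if s ∈ SQ then 1 else 0
  | k + 1, h, s =>
      if s ∈ SQ then
        ∑ s' : S,
          δ s (if isMax s then σ h s else τ h s) s' *
            stayB δ SQ isMax σ τ k (h ++ [(s, if isMax s then σ h s else τ h s)]) s'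
      else 0

/-- History-dependent strategies respecting the available actions `Av`. -/
def Strat {S A : Type} (Av : S → Finset A) : Type :=
  {f : List (S × A) → S → A // ∀ h s, f h s ∈ Av s}

/-- `pReach δ F isMax σ τ s = P_s^{σ,τ}(◇F)`, the probability of eventually reaching `F`,
as the supremum of the step-bounded reachability probabilities. -/
noncomputable def pReach {S A : Type} [Fintype S] [DecidableEq S]
    (δ : S → A → S → ℝ) (F : Finset S) (isMax : S → Bool)
    (σ τ : List (S × A) → S → A) (s : S) : ℝ :=
  ⨆ k : ℕ, reachB δ F isMax σ τ k [] s

/-- The value `V(s) = sup_σ inf_τ P_s^{σ,τ}(◇F)` of the reachability game. -/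
noncomputable def gameValue {S A : Type} [Fintype S] [DecidableEq S]
    (δ : S → A → S → ℝ) (Av : S → Finset A) (F : Finset S) (isMax : S → Bool)
    (s : S) : ℝ :=
  ⨆ σ : Strat Av, ⨅ τ : Strat Av, pReach δ F isMax σ.1 τ.1 s


open Filter Topology

section Aux

variable {S A : Type} [Fintype S] [DecidableEq S]
variable (δ : S → A → S → ℝ) (F : Finset S) (isMax : S → Bool)

/-- Shift a strategy by a history prefix. -/
def shifts (σ : List (S × A) → S → A) (h0 : List (S × A)) : List (S × A) → S → A :=
  fun h => σ (h0 ++ h)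

lemma reachB_nonneg (hδ0 : ∀ s a s', 0 ≤ δ s a s') (σ τ : List (S × A) → S → A) :
    ∀ (n : ℕ) (h : List (S × A)) (s : S), 0 ≤ reachB δ F isMax σ τ n h s := by
  intro n
  induction n with
  | zero =>
    intro h s; rw [reachB]; split <;> norm_num
  | succ n ih =>
    intro h s; rw [reachB]; split
    · norm_num
    · exact Finset.sum_nonneg fun s' _ => mul_nonneg (hδ0 _ _ _) (ih _ _)

lemma reachB_le_one (Av : S → Finset A)
    (hδ0 : ∀ s a s', 0 ≤ δ s a s') (hδ1 : ∀ s, ∀ a ∈ Av s, ∑ s' : S, δ s a s' = 1)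
    (σ τ : List (S × A) → S → A)
    (hσ : ∀ h s, σ h s ∈ Av s) (hτ : ∀ h s, τ h s ∈ Av s) :
    ∀ (n : ℕ) (h : List (S × A)) (s : S), reachB δ F isMax σ τ n h s ≤ 1 := by
  intro n
  induction n with
  | zero =>
    intro h s; rw [reachB]; split <;> norm_num
  | succ n ih =>
    intro h s; rw [reachB]; split
    · norm_num
    · set a := (if isMax s then σ h s else τ h s) with ha
      have haAv : a ∈ Av s := by
        rw [ha]; split
        · exact hσ h s
        · exact hτ h s
      calc ∑ s' : S, δ s a s' * reachB δ F isMax σ τ n (h ++ [(s, a)]) s'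
          ≤ ∑ s' : S, δ s a s' * 1 :=
            Finset.sum_le_sum fun s' _ =>
              mul_le_mul_of_nonneg_left (ih _ _) (hδ0 _ _ _)
        _ = 1 := by simp [hδ1 s a haAv]

lemma reachB_mono (hδ0 : ∀ s a s', 0 ≤ δ s a s') (σ τ : List (S × A) → S → A) :
    ∀ (n : ℕ) (h : List (S × A)) (s : S),
      reachB δ F isMax σ τ n h s ≤ reachB δ F isMax σ τ (n + 1) h s := by
  intro n
  induction n with
  | zero =>
    intro h s
    rw [reachB, reachB]; split
    · norm_num
    · exact Finset.sum_nonneg fun s' _ => mul_nonneg (hδ0 _ _ _)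
        (reachB_nonneg δ F isMax hδ0 σ τ _ _ _)
  | succ n ih =>
    intro h s
    rw [reachB]
    conv_rhs => rw [reachB]
    split
    · norm_num
    · exact Finset.sum_le_sum fun s' _ =>
        mul_le_mul_of_nonneg_left (ih _ _) (hδ0 _ _ _)

lemma reachB_monotone (hδ0 : ∀ s a s', 0 ≤ δ s a s') (σ τ : List (S × A) → S → A)
    (h : List (S × A)) (s : S) :
    Monotone (fun n => reachB δ F isMax σ τ n h s) :=
  monotone_nat_of_le_succ fun n => reachB_mono δ F isMax hδ0 σ τ n h s

lemma reachB_bdd (Av : S → Finset A)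
    (hδ0 : ∀ s a s', 0 ≤ δ s a s') (hδ1 : ∀ s, ∀ a ∈ Av s, ∑ s' : S, δ s a s' = 1)
    (σ τ : List (S × A) → S → A)
    (hσ : ∀ h s, σ h s ∈ Av s) (hτ : ∀ h s, τ h s ∈ Av s)
    (h : List (S × A)) (s : S) :
    BddAbove (Set.range fun n => reachB δ F isMax σ τ n h s) := by
  refine ⟨1, ?_⟩
  rintro x ⟨n, rfl⟩
  exact reachB_le_one δ F isMax Av hδ0 hδ1 σ τ hσ hτ n h s

/-- shift lemma -/
lemma reachB_shift (σ τ : List (S × A) → S → A) (h0 : List (S × A)) :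
    ∀ (n : ℕ) (h : List (S × A)) (s : S),
      reachB δ F isMax σ τ n (h0 ++ h) s
        = reachB δ F isMax (shifts σ h0) (shifts τ h0) n h s := by
  intro n
  induction n with
  | zero => intro h s; rw [reachB, reachB]
  | succ n ih =>
    intro h s
    rw [reachB]
    conv_rhs => rw [reachB]
    split
    · rfl
    · refine Finset.sum_congr rfl fun s' _ => ?_
      have hact : (if isMax s then σ (h0 ++ h) s else τ (h0 ++ h) s)
          = (if isMax s then shifts σ h0 h s else shifts τ h0 h s) := rfl
      rw [hact, ← ih (h ++ [(s, if isMax s then shifts σ h0 h s else shifts τ h0 h s)]) s',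
        ← List.append_assoc]

lemma reachB_hist (σ τ : List (S × A) → S → A) (h0 : List (S × A)) (n : ℕ) (s : S) :
    reachB δ F isMax σ τ n h0 s
      = reachB δ F isMax (shifts σ h0) (shifts τ h0) n [] s := by
  have := reachB_shift δ F isMax σ τ h0 n [] s
  rwa [List.append_nil] at this

/-- congruence on the tail: if two minimizer strategies agree on all histories starting
with `p`, the bounded reachability from such a history agrees. -/
lemma reachB_congr_tail (σ τ1 τ2 : List (S × A) → S → A) (p : S × A)
    (hτ : ∀ t s, τ1 (p :: t) s = τ2 (p :: t) s) :
    ∀ (n : ℕ) (t : List (S × A)) (s : S),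
      reachB δ F isMax σ τ1 n (p :: t) s = reachB δ F isMax σ τ2 n (p :: t) s := by
  intro n
  induction n with
  | zero => intro t s; rw [reachB, reachB]
  | succ n ih =>
    intro t s
    rw [reachB]
    conv_rhs => rw [reachB]
    split
    · rfl
    · rw [hτ t s]
      exact Finset.sum_congr rfl fun s' _ => by
        rw [show (p :: t) ++ [(s, if isMax s then σ (p :: t) s else τ2 (p :: t) s)]
            = p :: (t ++ [(s, if isMax s then σ (p :: t) s else τ2 (p :: t) s)]) from rfl,
          ih]

lemma reachB_congr_start (σ τ1 τ2 : List (S × A) → S → A) (s : S)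
    (h0 : τ1 [] s = τ2 [] s)
    (h1 : ∀ (a : A) (t : List (S × A)) (s' : S), τ1 ((s, a) :: t) s' = τ2 ((s, a) :: t) s') :
    ∀ n : ℕ, reachB δ F isMax σ τ1 n [] s = reachB δ F isMax σ τ2 n [] s := by
  intro n
  cases n with
  | zero => rw [reachB, reachB]
  | succ n =>
    rw [reachB]
    conv_rhs => rw [reachB]
    split
    · rfl
    · rw [h0]
      exact Finset.sum_congr rfl fun s' _ => by
        rw [show ([] : List (S × A)) ++ [(s, if isMax s then σ [] s else τ2 [] s)]
            = ((s, if isMax s then σ [] s else τ2 [] s)) :: ([] : List (S × A)) from rfl,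
          reachB_congr_tail δ F isMax σ τ1 τ2 _ (fun t s'' => h1 _ t s'')]

lemma pReach_nonneg (hδ0 : ∀ s a s', 0 ≤ δ s a s') (σ τ : List (S × A) → S → A) (s : S)
    (Av : S → Finset A) (hδ1 : ∀ s, ∀ a ∈ Av s, ∑ s' : S, δ s a s' = 1)
    (hσ : ∀ h s, σ h s ∈ Av s) (hτ : ∀ h s, τ h s ∈ Av s) :
    0 ≤ pReach δ F isMax σ τ s :=
  le_ciSup_of_le (reachB_bdd δ F isMax Av hδ0 hδ1 σ τ hσ hτ [] s) 0
    (reachB_nonneg δ F isMax hδ0 σ τ 0 [] s)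

lemma pReach_le_one (Av : S → Finset A)
    (hδ0 : ∀ s a s', 0 ≤ δ s a s') (hδ1 : ∀ s, ∀ a ∈ Av s, ∑ s' : S, δ s a s' = 1)
    (σ τ : List (S × A) → S → A)
    (hσ : ∀ h s, σ h s ∈ Av s) (hτ : ∀ h s, τ h s ∈ Av s) (s : S) :
    pReach δ F isMax σ τ s ≤ 1 :=
  ciSup_le fun n => reachB_le_one δ F isMax Av hδ0 hδ1 σ τ hσ hτ n [] s

lemma pReach_congr (σ τ1 τ2 : List (S × A) → S → A) (s : S)
    (h0 : τ1 [] s = τ2 [] s)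
    (h1 : ∀ (a : A) (t : List (S × A)) (s' : S), τ1 ((s, a) :: t) s' = τ2 ((s, a) :: t) s') :
    pReach δ F isMax σ τ1 s = pReach δ F isMax σ τ2 s := by
  unfold pReach
  exact congrArg _ (funext fun n => reachB_congr_start δ F isMax σ τ1 τ2 s h0 h1 n)

/-- one step unfolding of `pReach`. -/
lemma pReach_step (Av : S → Finset A)
    (hδ0 : ∀ s a s', 0 ≤ δ s a s') (hδ1 : ∀ s, ∀ a ∈ Av s, ∑ s' : S, δ s a s' = 1)
    (σ τ : List (S × A) → S → A)
    (hσ : ∀ h s, σ h s ∈ Av s) (hτ : ∀ h s, τ h s ∈ Av s) (s : S) (hsF : s ∉ F) :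
    pReach δ F isMax σ τ s
      = ∑ s' : S, δ s (if isMax s then σ [] s else τ [] s) s' *
          pReach δ F isMax
            (shifts σ [(s, if isMax s then σ [] s else τ [] s)])
            (shifts τ [(s, if isMax s then σ [] s else τ [] s)]) s' := by
  set a := (if isMax s then σ [] s else τ [] s) with ha
  have h1 : ∀ n : ℕ, reachB δ F isMax σ τ (n + 1) [] s
      = ∑ s' : S, δ s a s' *
          reachB δ F isMax (shifts σ [(s, a)]) (shifts τ [(s, a)]) n [] s' := by
    intro n
    rw [reachB, if_neg hsF]
    refine Finset.sum_congr rfl fun s' _ => ?_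
    rw [show ([] : List (S × A)) ++ [(s, a)] = [(s, a)] from rfl,
      reachB_hist δ F isMax σ τ [(s, a)] n s']
  have t1 : Tendsto (fun n => reachB δ F isMax σ τ n [] s) atTop
      (𝓝 (pReach δ F isMax σ τ s)) :=
    tendsto_atTop_ciSup (reachB_monotone δ F isMax hδ0 σ τ [] s)
      (reachB_bdd δ F isMax Av hδ0 hδ1 σ τ hσ hτ [] s)
  have t2 : Tendsto (fun n => reachB δ F isMax σ τ (n + 1) [] s) atTop
      (𝓝 (pReach δ F isMax σ τ s)) := (tendsto_add_atTop_iff_nat 1).2 t1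
  have t3 : Tendsto
      (fun n => ∑ s' : S, δ s a s' *
        reachB δ F isMax (shifts σ [(s, a)]) (shifts τ [(s, a)]) n [] s') atTop
      (𝓝 (∑ s' : S, δ s a s' *
        pReach δ F isMax (shifts σ [(s, a)]) (shifts τ [(s, a)]) s')) := by
    refine tendsto_finset_sum _ fun s' _ => Tendsto.const_mul _ ?_
    exact tendsto_atTop_ciSup
      (reachB_monotone δ F isMax hδ0 _ _ [] s')
      (reachB_bdd δ F isMax Av hδ0 hδ1 _ _ (fun h s => hσ _ s) (fun h s => hτ _ s) [] s')
  have t2' : Tendsto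
      (fun n => ∑ s' : S, δ s a s' *
        reachB δ F isMax (shifts σ [(s, a)]) (shifts τ [(s, a)]) n [] s') atTop
      (𝓝 (pReach δ F isMax σ τ s)) := by
    refine t2.congr fun n => ?_
    exact h1 n
  exact tendsto_nhds_unique t2' t3

end Aux

/-- Inequality (4): for any optimal Maximizer strategy `σ*` for `◇F`, any Minimizer
strategy `τ`, any `k ≥ 0`, and any `u ≥ max_{s∈S?} P_s^{σ*,τ}(◇F)`, for every state `s`:
`V(s) ≤ P_s^{σ*,τ}(◇^{≤k}F) + P_s^{σ*,τ}(□^{≤k}S?)·u`. -/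
theorem stmt7 {S A : Type} [Fintype S] [DecidableEq S]
    (δ : S → A → S → ℝ) (Av : S → Finset A) (isMax : S → Bool)
    (F Z SQ : Finset S)
    (hδ0 : ∀ s a s', 0 ≤ δ s a s')
    (hδ1 : ∀ s, ∀ a ∈ Av s, ∑ s' : S, δ s a s' = 1)
    (hAv : ∀ s, (Av s).Nonempty)
    (hpart : ∀ s, s ∈ SQ ↔ s ∉ F ∧ s ∉ Z)
    (hZ : ∀ s ∈ Z, ∀ σ τ : Strat Av, pReach δ F isMax σ.1 τ.1 s = 0)
    (σstar : Strat Av)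
    (hopt : ∀ s, (⨅ τ : Strat Av, pReach δ F isMax σstar.1 τ.1 s)
      = gameValue δ Av F isMax s)
    (τ : Strat Av) (k : ℕ) (u : ℝ)
    (hu : ∀ s ∈ SQ, pReach δ F isMax σstar.1 τ.1 s ≤ u) :
    ∀ s : S, gameValue δ Av F isMax s ≤
      reachB δ F isMax σstar.1 τ.1 k [] s + stayB δ SQ isMax σstar.1 τ.1 k [] s * u := by
  classical
  -- abbreviations
  set σ0 : List (S × A) → S → A := σstar.1 with hσ0
  set τ0 : List (S × A) → S → A := τ.1 with hτ0
  have hσAv : ∀ h s, σ0 h s ∈ Av s := σstar.2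
  have hτAv : ∀ h s, τ0 h s ∈ Av s := τ.2
  have hNE : Nonempty (Strat Av) :=
    ⟨⟨fun _ s => (hAv s).choose, fun _ s => (hAv s).choose_spec⟩⟩
  -- the inf-value of the shifted strategy
  set W : List (S × A) → S → ℝ :=
    fun h s => ⨅ τ' : Strat Av, pReach δ F isMax (shifts σ0 h) τ'.1 s with hWdef
  have hshiftAv : ∀ (ρ : List (S × A) → S → A), (∀ h s, ρ h s ∈ Av s) →
      ∀ h0 h s, shifts ρ h0 h s ∈ Av s := fun ρ hρ h0 h s => hρ _ s
  have hbddBelow : ∀ h s, BddBelow (Set.range fun τ' : Strat Av =>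
      pReach δ F isMax (shifts σ0 h) τ'.1 s) := by
    intro h s
    refine ⟨0, ?_⟩
    rintro x ⟨τ', rfl⟩
    exact pReach_nonneg δ F isMax hδ0 _ _ s Av hδ1 (hshiftAv σ0 hσAv h) τ'.2
  have hW_le : ∀ h s (τ' : Strat Av),
      W h s ≤ pReach δ F isMax (shifts σ0 h) τ'.1 s := fun h s τ' =>
    ciInf_le (hbddBelow h s) τ'
  -- W ≤ 1
  have hW_le_one : ∀ h s, W h s ≤ 1 := by
    intro h s
    obtain ⟨τ'⟩ := hNE
    exact le_trans (hW_le h s τ')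
      (pReach_le_one δ F isMax Av hδ0 hδ1 _ _ (hshiftAv σ0 hσAv h) τ'.2 s)
  -- W ≤ 0 on Z
  have hW_Z : ∀ h s, s ∈ Z → W h s ≤ 0 := by
    intro h s hs
    obtain ⟨τ'⟩ := hNE
    refine le_trans (hW_le h s τ') ?_
    exact le_of_eq (hZ s hs ⟨shifts σ0 h, hshiftAv σ0 hσAv h⟩ τ')
  -- W ≤ u on SQ
  have hW_SQ : ∀ h s, s ∈ SQ → W h s ≤ u := by
    intro h s hs
    have h1 : W h s ≤ gameValue δ Av F isMax s := by
      have hbdd : BddAbove (Set.range fun σ' : Strat Av =>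
          ⨅ τ' : Strat Av, pReach δ F isMax σ'.1 τ'.1 s) := by
        refine ⟨1, ?_⟩
        rintro x ⟨σ', rfl⟩
        obtain ⟨τ'⟩ := hNE
        refine ciInf_le_of_le ?_ τ'
          (pReach_le_one δ F isMax Av hδ0 hδ1 _ _ σ'.2 τ'.2 s)
        refine ⟨0, ?_⟩
        rintro x ⟨τ'', rfl⟩
        exact pReach_nonneg δ F isMax hδ0 _ _ s Av hδ1 σ'.2 τ''.2
      exact le_ciSup_of_le hbdd ⟨shifts σ0 h, hshiftAv σ0 hσAv h⟩ le_rfl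
    have h2 : gameValue δ Av F isMax s ≤ u := by
      rw [← hopt s]
      exact le_trans (ciInf_le (by
        refine ⟨0, ?_⟩
        rintro x ⟨τ'', rfl⟩
        exact pReach_nonneg δ F isMax hδ0 _ _ s Av hδ1 hσAv τ''.2) τ) (hu s hs)
    exact le_trans h1 h2
  -- the supermartingale step
  have hW_step : ∀ h s, s ∉ F →
      W h s ≤ ∑ s' : S, δ s (if isMax s then σ0 h s else τ0 h s) s' *
        W (h ++ [(s, if isMax s then σ0 h s else τ0 h s)]) s' := by
    intro h s hsF
    set aS := (if isMax s then σ0 h s else τ0 h s) with haS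
    have haSAv : aS ∈ Av s := by
      rw [haS]; split
      · exact hσAv h s
      · exact hτAv h s
    refine le_of_forall_pos_le_add fun ε hε => ?_
    -- pick ε-optimal responses
    have hex : ∀ s' : S, ∃ τ'' : Strat Av,
        pReach δ F isMax (shifts σ0 (h ++ [(s, aS)])) τ''.1 s'
          < W (h ++ [(s, aS)]) s' + ε := by
      intro s'
      exact exists_lt_of_ciInf_lt (lt_add_of_pos_right _ hε)
    choose τfam hτfam using hex
    -- the first state of a (relative) history
    set fstSt : List (S × A) → S → S := fun t s'' =>
      match t with
      | [] => s''
      | q :: _ => q.1 with hfstSt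
    -- the combined minimizer strategy
    set τc : List (S × A) → S → A := fun h'' s'' =>
      match h'' with
      | [] => if s'' = s then aS else (τfam s'').1 [] s''
      | _ :: t => (τfam (fstSt t s'')).1 t s'' with hτc
    have hτcAv : ∀ h'' s'', τc h'' s'' ∈ Av s'' := by
      intro h'' s''
      rw [hτc]
      cases h'' with
      | nil =>
        simp only
        split
        · next heq => exact heq ▸ haSAv
        · exact (τfam s'').2 [] s''
      | cons p t => exact (τfam (fstSt t s'')).2 t s''
    have hτcStrat : Strat Av := ⟨τc, hτcAv⟩
    have hstep := pReach_step δ F isMax Av hδ0 hδ1 (shifts σ0 h) τc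
      (hshiftAv σ0 hσAv h) hτcAv s hsF
    have ha0 : (if isMax s then (shifts σ0 h) [] s else τc [] s) = aS := by
      cases hM : isMax s
      · simp [hM, hτc]
      · rw [haS]; simp [hM, shifts]
    rw [ha0] at hstep
    have hWc : W h s ≤ pReach δ F isMax (shifts σ0 h) τc s := hW_le h s ⟨τc, hτcAv⟩
    rw [hstep] at hWc
    -- identify the shifted strategies
    have hσeq : shifts (shifts σ0 h) [(s, aS)] = shifts σ0 (h ++ [(s, aS)]) := by
      funext h'' s''
      simp only [shifts, List.append_assoc]
    rw [hσeq] at hWc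
    have hkey : ∀ s' : S,
        pReach δ F isMax (shifts σ0 (h ++ [(s, aS)])) (shifts τc [(s, aS)]) s'
          ≤ W (h ++ [(s, aS)]) s' + ε := by
      intro s'
      have hcongr : pReach δ F isMax (shifts σ0 (h ++ [(s, aS)])) (shifts τc [(s, aS)]) s'
          = pReach δ F isMax (shifts σ0 (h ++ [(s, aS)])) (τfam s').1 s' := by
        refine pReach_congr δ F isMax _ _ _ s' ?_ ?_
        · rfl
        · intro a t s''
          rfl
      rw [hcongr]
      exact le_of_lt (hτfam s')
    calc W h s ≤ ∑ s' : S, δ s aS s' *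
          pReach δ F isMax (shifts σ0 (h ++ [(s, aS)])) (shifts τc [(s, aS)]) s' := hWc
      _ ≤ ∑ s' : S, δ s aS s' * (W (h ++ [(s, aS)]) s' + ε) :=
          Finset.sum_le_sum fun s' _ =>
            mul_le_mul_of_nonneg_left (hkey s') (hδ0 _ _ _)
      _ = (∑ s' : S, δ s aS s' * W (h ++ [(s, aS)]) s') + (∑ s' : S, δ s aS s') * ε := by
          rw [Finset.sum_mul, ← Finset.sum_add_distrib]
          exact Finset.sum_congr rfl fun s' _ => by ring
      _ = (∑ s' : S, δ s aS s' * W (h ++ [(s, aS)]) s') + ε := by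
          rw [hδ1 s aS haSAv, one_mul]
  -- main induction
  have hmain : ∀ (k : ℕ) (h : List (S × A)) (s : S),
      W h s ≤ reachB δ F isMax σ0 τ0 k h s + stayB δ SQ isMax σ0 τ0 k h s * u := by
    intro k
    induction k with
    | zero =>
      intro h s
      rw [reachB, stayB]
      by_cases hsF : s ∈ F
      · have hsSQ : s ∉ SQ := fun hsq => ((hpart s).1 hsq).1 hsF
        rw [if_pos hsF, if_neg hsSQ]
        simpa using hW_le_one h s
      · rw [if_neg hsF]
        by_cases hsSQ : s ∈ SQ
        · rw [if_pos hsSQ]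
          simpa using hW_SQ h s hsSQ
        · have hsZ : s ∈ Z := by
            by_contra hz
            exact hsSQ ((hpart s).2 ⟨hsF, hz⟩)
          rw [if_neg hsSQ]
          simpa using hW_Z h s hsZ
    | succ k ih =>
      intro h s
      rw [reachB, stayB]
      by_cases hsF : s ∈ F
      · have hsSQ : s ∉ SQ := fun hsq => ((hpart s).1 hsq).1 hsF
        rw [if_pos hsF, if_neg hsSQ]
        simpa using hW_le_one h s
      · rw [if_neg hsF]
        by_cases hsSQ : s ∈ SQ
        · rw [if_pos hsSQ]
          refine le_trans (hW_step h s hsF) ?_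
          set aS := (if isMax s then σ0 h s else τ0 h s)
          calc ∑ s' : S, δ s aS s' * W (h ++ [(s, aS)]) s'
              ≤ ∑ s' : S, δ s aS s' *
                  (reachB δ F isMax σ0 τ0 k (h ++ [(s, aS)]) s'
                    + stayB δ SQ isMax σ0 τ0 k (h ++ [(s, aS)]) s' * u) :=
                Finset.sum_le_sum fun s' _ =>
                  mul_le_mul_of_nonneg_left (ih _ s') (hδ0 _ _ _)
            _ = (∑ s' : S, δ s aS s' * reachB δ F isMax σ0 τ0 k (h ++ [(s, aS)]) s')
                + (∑ s' : S, δ s aS s' * stayB δ SQ isMax σ0 τ0 k (h ++ [(s, aS)]) s') * u := by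
                rw [Finset.sum_mul, ← Finset.sum_add_distrib]
                exact Finset.sum_congr rfl fun s' _ => by ring
        · have hsZ : s ∈ Z := by
            by_contra hz
            exact hsSQ ((hpart s).2 ⟨hsF, hz⟩)
          rw [if_neg hsSQ]
          have h1 : W h s ≤ 0 := hW_Z h s hsZ
          have h2 : 0 ≤ ∑ s' : S,
              δ s (if isMax s then σ0 h s else τ0 h s) s' *
                reachB δ F isMax σ0 τ0 k
                  (h ++ [(s, if isMax s then σ0 h s else τ0 h s)]) s' :=
            Finset.sum_nonneg fun s' _ => mul_nonneg (hδ0 _ _ _)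
              (reachB_nonneg δ F isMax hδ0 σ0 τ0 _ _ _)
          simpa using le_trans h1 (by linarith)
  -- conclude
  intro s
  have hWeq : gameValue δ Av F isMax s = W [] s := by
    rw [← hopt s]
    rfl
  rw [hWeq]
  exact hmain k [] s
end

section
/- Let T be an end component of a finite stochastic game with reachability value V, and let f : S → ℝ satisfy f ≥ V pointwise. Then for every Maximizer state-action pair (s,a) in the best-exit set bexit^□_f(T) = argmax over Maximizer states s∈T and actions a with Post(s,a) ⊄ T of ∑_{s'} δ(s,a,s')·f(s'), we have ∑_{s'} δ(s,a,s')·f(s') ≥ V(s). -/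
/-- `T` is an end component with action set `B` (Def. 2): `B` is a nonempty set of
state-action pairs of states in `T` whose transitions stay inside `T`, and `T` is
strongly connected using only the actions of `B`. -/
def IsEC {S A : Type} (δ : S → A → S → ℝ) (Av : S → Finset A)
    (T : Finset S) (B : Finset (S × A)) : Prop :=
  B.Nonempty ∧
  (∀ p ∈ B, p.1 ∈ T ∧ p.2 ∈ Av p.1 ∧ ∀ s' : S, δ p.1 p.2 s' ≠ 0 → s' ∈ T) ∧
  ∀ s ∈ T, ∀ s' ∈ T,
    Relation.ReflTransGen (fun x y : S => ∃ a : A, (x, a) ∈ B ∧ δ x a y ≠ 0) s s'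

set_option linter.unusedVariables false
set_option linter.unusedSectionVars false

namespace Stmt10Aux

variable {S A : Type} [Fintype S] [DecidableEq S]
variable {δ : S → A → S → ℝ} {Av : S → Finset A} {F : Finset S} {isMax : S → Bool}


lemma reachB_nonneg (hδ0 : ∀ s a s', 0 ≤ δ s a s') (σ τ : List (S × A) → S → A) :
    ∀ (k : ℕ) (h : List (S × A)) (s : S), 0 ≤ reachB δ F isMax σ τ k h s := by
  intro k
  induction k with
  | zero => intro h s; rw [reachB]; split <;> norm_num
  | succ k ih =>
    intro h s; rw [reachB]; split
    · norm_num
    · exact Finset.sum_nonneg fun s' _ => mul_nonneg (hδ0 _ _ _) (ih _ _)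

lemma reachB_le_one (hδ0 : ∀ s a s', 0 ≤ δ s a s')
    (hδ1 : ∀ s, ∀ a ∈ Av s, ∑ s' : S, δ s a s' = 1)
    (σ τ : List (S × A) → S → A)
    (hσ : ∀ h s, σ h s ∈ Av s) (hτ : ∀ h s, τ h s ∈ Av s) :
    ∀ (k : ℕ) (h : List (S × A)) (s : S), reachB δ F isMax σ τ k h s ≤ 1 := by
  intro k
  induction k with
  | zero => intro h s; rw [reachB]; split <;> norm_num
  | succ k ih =>
    intro h s; rw [reachB]; split
    · norm_num
    · have hact : (if isMax s then σ h s else τ h s) ∈ Av s := by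
        split <;> [exact hσ h s; exact hτ h s]
      calc ∑ s' : S, δ s (if isMax s then σ h s else τ h s) s' *
            reachB δ F isMax σ τ k (h ++ [(s, if isMax s then σ h s else τ h s)]) s'
          ≤ ∑ s' : S, δ s (if isMax s then σ h s else τ h s) s' * 1 :=
            Finset.sum_le_sum fun s' _ =>
              mul_le_mul_of_nonneg_left (ih _ _) (hδ0 _ _ _)
        _ = 1 := by simp [hδ1 s _ hact]



lemma reachB_le_succ (hδ0 : ∀ s a s', 0 ≤ δ s a s') (σ τ : List (S × A) → S → A) :
    ∀ (k : ℕ) (h : List (S × A)) (s : S),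
      reachB δ F isMax σ τ k h s ≤ reachB δ F isMax σ τ (k + 1) h s := by
  intro k
  induction k with
  | zero =>
    intro h s
    rw [reachB, reachB]
    split
    · norm_num
    · exact Finset.sum_nonneg fun s' _ => mul_nonneg (hδ0 _ _ _)
        (by rw [reachB]; split <;> norm_num)
  | succ k ih =>
    intro h s
    rw [reachB, show (k+1)+1 = (k+1)+1 from rfl, reachB]
    split
    · norm_num
    · exact Finset.sum_le_sum fun s' _ =>
        mul_le_mul_of_nonneg_left (ih _ _) (hδ0 _ _ _)

lemma reachB_mono (hδ0 : ∀ s a s', 0 ≤ δ s a s') (σ τ : List (S × A) → S → A)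
    (h : List (S × A)) (s : S) :
    Monotone fun k => reachB δ F isMax σ τ k h s :=
  monotone_nat_of_le_succ fun k => reachB_le_succ hδ0 σ τ k h s

lemma reachB_shift (σ τ : List (S × A) → S → A) :
    ∀ (k : ℕ) (h₀ h : List (S × A)) (s : S),
      reachB δ F isMax σ τ k (h₀ ++ h) s =
        reachB δ F isMax (fun h' => σ (h₀ ++ h')) (fun h' => τ (h₀ ++ h')) k h s := by
  intro k
  induction k with
  | zero => intro h₀ h s; rw [reachB, reachB]
  | succ k ih =>
    intro h₀ h s
    rw [reachB, reachB]
    split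
    · rfl
    · refine Finset.sum_congr rfl fun s' _ => ?_
      have := ih h₀ (h ++ [(s, if isMax s then σ (h₀ ++ h) s else τ (h₀ ++ h) s)]) s'
      rw [← List.append_assoc] at this
      rw [this]

lemma reachB_congr (σ₁ τ₁ σ₂ τ₂ : List (S × A) → S → A) :
    ∀ (k : ℕ) (h : List (S × A)) (s : S),
      σ₁ h s = σ₂ h s → τ₁ h s = τ₂ h s →
      (∀ (a₀ : A) (h' : List (S × A)) (u : S),
        σ₁ (h ++ (s, a₀) :: h') u = σ₂ (h ++ (s, a₀) :: h') u) →
      (∀ (a₀ : A) (h' : List (S × A)) (u : S),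
        τ₁ (h ++ (s, a₀) :: h') u = τ₂ (h ++ (s, a₀) :: h') u) →
      reachB δ F isMax σ₁ τ₁ k h s = reachB δ F isMax σ₂ τ₂ k h s := by
  intro k
  induction k with
  | zero => intro h s _ _ _ _; rw [reachB, reachB]
  | succ k ih =>
    intro h s h1 h2 h3 h4
    rw [reachB, reachB]
    split
    · rfl
    · have hact : (if isMax s then σ₁ h s else τ₁ h s)
          = (if isMax s then σ₂ h s else τ₂ h s) := by
        split <;> [exact h1; exact h2]
    
      rw [← hact]
      refine Finset.sum_congr rfl fun s' _ => ?_
      congr 1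
      refine ih (h ++ [(s, if isMax s then σ₁ h s else τ₁ h s)]) s' ?_ ?_ ?_ ?_
      · exact h3 _ [] s'
      · exact h4 _ [] s'
      · intro a₀ h' u
        rw [List.append_assoc]
        exact h3 _ _ u
      · intro a₀ h' u
        rw [List.append_assoc]
        exact h4 _ _ u


lemma reachB_bddAbove (hδ0 : ∀ s a s', 0 ≤ δ s a s')
    (hδ1 : ∀ s, ∀ a ∈ Av s, ∑ s' : S, δ s a s' = 1)
    (σ τ : List (S × A) → S → A)
    (hσ : ∀ h s, σ h s ∈ Av s) (hτ : ∀ h s, τ h s ∈ Av s)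
    (h : List (S × A)) (s : S) :
    BddAbove (Set.range fun k => reachB δ F isMax σ τ k h s) := by
  refine ⟨1, ?_⟩
  rintro x ⟨k, rfl⟩
  exact reachB_le_one hδ0 hδ1 σ τ hσ hτ k h s

lemma pReach_nonneg (hδ0 : ∀ s a s', 0 ≤ δ s a s')
    (hδ1 : ∀ s, ∀ a ∈ Av s, ∑ s' : S, δ s a s' = 1)
    (σ τ : List (S × A) → S → A)
    (hσ : ∀ h s, σ h s ∈ Av s) (hτ : ∀ h s, τ h s ∈ Av s) (s : S) :
    0 ≤ pReach δ F isMax σ τ s := by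
  have h := le_ciSup (f := fun k => reachB δ F isMax σ τ k [] s)
    (reachB_bddAbove (Av := Av) hδ0 hδ1 σ τ hσ hτ [] s) 0
  exact le_trans (reachB_nonneg hδ0 σ τ 0 [] s) h

lemma pReach_le_one (hδ0 : ∀ s a s', 0 ≤ δ s a s')
    (hδ1 : ∀ s, ∀ a ∈ Av s, ∑ s' : S, δ s a s' = 1)
    (σ τ : List (S × A) → S → A)
    (hσ : ∀ h s, σ h s ∈ Av s) (hτ : ∀ h s, τ h s ∈ Av s) (s : S) :
    pReach δ F isMax σ τ s ≤ 1 :=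
  ciSup_le fun k => reachB_le_one hδ0 hδ1 σ τ hσ hτ k [] s

lemma pReach_of_mem (σ τ : List (S × A) → S → A) {s : S} (hs : s ∈ F) :
    pReach δ F isMax σ τ s = 1 := by
  have : ∀ k, reachB δ F isMax σ τ k [] s = 1 := by
    intro k; cases k <;> · rw [reachB]; rw [if_pos hs]
  unfold pReach
  simp only [this, ciSup_const]

lemma pReach_tendsto (hδ0 : ∀ s a s', 0 ≤ δ s a s')
    (hδ1 : ∀ s, ∀ a ∈ Av s, ∑ s' : S, δ s a s' = 1)
    (σ τ : List (S × A) → S → A)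
    (hσ : ∀ h s, σ h s ∈ Av s) (hτ : ∀ h s, τ h s ∈ Av s) (s : S) :
    Filter.Tendsto (fun k => reachB δ F isMax σ τ k [] s) Filter.atTop
      (nhds (pReach δ F isMax σ τ s)) :=
  tendsto_atTop_ciSup (reachB_mono hδ0 σ τ [] s)
    (reachB_bddAbove (Av := Av) hδ0 hδ1 σ τ hσ hτ [] s)

/-- One-step decomposition of `pReach` at a non-target state. -/
lemma pReach_step (hδ0 : ∀ s a s', 0 ≤ δ s a s')
    (hδ1 : ∀ s, ∀ a ∈ Av s, ∑ s' : S, δ s a s' = 1)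
    (σ τ : List (S × A) → S → A)
    (hσ : ∀ h s, σ h s ∈ Av s) (hτ : ∀ h s, τ h s ∈ Av s)
    (t : S) (htF : t ∉ F) (act : A)
    (hact : (if isMax t then σ [] t else τ [] t) = act) :
    pReach δ F isMax σ τ t =
      ∑ t' : S, δ t act t' *
        pReach δ F isMax (fun h' => σ ((t, act) :: h')) (fun h' => τ ((t, act) :: h')) t' := by
  have hσ' : ∀ h s, (fun h' => σ ((t, act) :: h')) h s ∈ Av s := fun h s => hσ _ s
  have hτ' : ∀ h s, (fun h' => τ ((t, act) :: h')) h s ∈ Av s := fun h s => hτ _ s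
  have h1 : Filter.Tendsto (fun k => reachB δ F isMax σ τ (k + 1) [] t) Filter.atTop
      (nhds (pReach δ F isMax σ τ t)) := by
    exact (Filter.tendsto_add_atTop_iff_nat 1).mpr (pReach_tendsto hδ0 hδ1 σ τ hσ hτ t)
  have heq : ∀ k, reachB δ F isMax σ τ (k + 1) [] t =
      ∑ t' : S, δ t act t' *
        reachB δ F isMax (fun h' => σ ((t, act) :: h')) (fun h' => τ ((t, act) :: h')) k [] t' := by
    intro k
    rw [reachB, if_neg htF]
    refine Finset.sum_congr rfl fun t' _ => ?_
    rw [hact]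
    congr 1
    have := reachB_shift (δ := δ) (F := F) (isMax := isMax) σ τ k [(t, act)] [] t'
    simpa using this
  have h2 : Filter.Tendsto (fun k => reachB δ F isMax σ τ (k + 1) [] t) Filter.atTop
      (nhds (∑ t' : S, δ t act t' *
        pReach δ F isMax (fun h' => σ ((t, act) :: h')) (fun h' => τ ((t, act) :: h')) t')) := by
    simp only [heq]
    exact tendsto_finset_sum _ fun t' _ =>
      (pReach_tendsto hδ0 hδ1 _ _ hσ' hτ' t').const_mul _
  exact tendsto_nhds_unique h1 h2
set_option linter.unusedSectionVars false
lemma stratNonempty (hAv : ∀ s, (Av s).Nonempty) : Nonempty (Strat Av) :=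
  ⟨⟨fun _ s => (hAv s).choose, fun _ s => (hAv s).choose_spec⟩⟩

lemma innerInf_bddBelow (hδ0 : ∀ s a s', 0 ≤ δ s a s')
    (hδ1 : ∀ s, ∀ a ∈ Av s, ∑ s' : S, δ s a s' = 1)
    (σ : Strat Av) (s : S) :
    BddBelow (Set.range fun τ : Strat Av => pReach δ F isMax σ.1 τ.1 s) := by
  refine ⟨0, ?_⟩
  rintro x ⟨τ, rfl⟩
  exact pReach_nonneg hδ0 hδ1 σ.1 τ.1 σ.2 τ.2 s

lemma innerInf_nonneg (hδ0 : ∀ s a s', 0 ≤ δ s a s')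
    (hδ1 : ∀ s, ∀ a ∈ Av s, ∑ s' : S, δ s a s' = 1)
    (hAv : ∀ s, (Av s).Nonempty) (σ : Strat Av) (s : S) :
    0 ≤ ⨅ τ : Strat Av, pReach δ F isMax σ.1 τ.1 s := by
  haveI := stratNonempty hAv
  exact le_ciInf fun τ => pReach_nonneg hδ0 hδ1 σ.1 τ.1 σ.2 τ.2 s

lemma innerInf_le_one (hδ0 : ∀ s a s', 0 ≤ δ s a s')
    (hδ1 : ∀ s, ∀ a ∈ Av s, ∑ s' : S, δ s a s' = 1)
    (hAv : ∀ s, (Av s).Nonempty) (σ : Strat Av) (s : S) :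
    (⨅ τ : Strat Av, pReach δ F isMax σ.1 τ.1 s) ≤ 1 := by
  haveI := stratNonempty hAv
  obtain ⟨τ⟩ := stratNonempty (hAv := hAv)
  exact le_trans (ciInf_le (innerInf_bddBelow hδ0 hδ1 σ s) τ)
    (pReach_le_one hδ0 hδ1 σ.1 τ.1 σ.2 τ.2 s)

lemma gameValue_bddAbove (hδ0 : ∀ s a s', 0 ≤ δ s a s')
    (hδ1 : ∀ s, ∀ a ∈ Av s, ∑ s' : S, δ s a s' = 1)
    (hAv : ∀ s, (Av s).Nonempty) (s : S) :
    BddAbove (Set.range fun σ : Strat Av => ⨅ τ : Strat Av, pReach δ F isMax σ.1 τ.1 s) := by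
  refine ⟨1, ?_⟩
  rintro x ⟨σ, rfl⟩
  exact innerInf_le_one hδ0 hδ1 hAv σ s

lemma gameValue_nonneg (hδ0 : ∀ s a s', 0 ≤ δ s a s')
    (hδ1 : ∀ s, ∀ a ∈ Av s, ∑ s' : S, δ s a s' = 1)
    (hAv : ∀ s, (Av s).Nonempty) (s : S) :
    0 ≤ gameValue δ Av F isMax s := by
  obtain ⟨σ⟩ := stratNonempty (hAv := hAv)
  refine le_trans (innerInf_nonneg (F := F) (isMax := isMax) hδ0 hδ1 hAv σ s) ?_
  exact le_ciSup (f := fun σ : Strat Av => ⨅ τ : Strat Av, pReach δ F isMax σ.1 τ.1 s)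
    (gameValue_bddAbove hδ0 hδ1 hAv s) σ

lemma gameValue_le_one (hδ0 : ∀ s a s', 0 ≤ δ s a s')
    (hδ1 : ∀ s, ∀ a ∈ Av s, ∑ s' : S, δ s a s' = 1)
    (hAv : ∀ s, (Av s).Nonempty) (s : S) :
    gameValue δ Av F isMax s ≤ 1 := by
  haveI := stratNonempty hAv
  exact ciSup_le fun σ => innerInf_le_one hδ0 hδ1 hAv σ s

lemma gameValue_of_mem (hAv : ∀ s, (Av s).Nonempty) {s : S} (hs : s ∈ F) :
    gameValue δ Av F isMax s = 1 := by
  haveI := stratNonempty hAv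
  unfold gameValue
  have h1 : ∀ σ : Strat Av, (⨅ τ : Strat Av, pReach δ F isMax σ.1 τ.1 s) = 1 := by
    intro σ
    have : ∀ τ : Strat Av, pReach δ F isMax σ.1 τ.1 s = 1 := fun τ =>
      pReach_of_mem σ.1 τ.1 hs
    simp only [this, ciInf_const]
  simp only [h1, ciSup_const]
/-- first state of a (nonempty) continuation history, else the current state -/
def hd1 {S A : Type} : List (S × A) → S → S := fun h u =>
  match h with
  | [] => u
  | (v, _) :: _ => v

lemma exists_eps_opt (hδ0 : ∀ s a s', 0 ≤ δ s a s')
    (hδ1 : ∀ s, ∀ a ∈ Av s, ∑ s' : S, δ s a s' = 1)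
    (hAv : ∀ s, (Av s).Nonempty) {ε : ℝ} (hε : 0 < ε) (w : S) :
    ∃ σw : Strat Av,
      gameValue δ Av F isMax w - ε < ⨅ τ : Strat Av, pReach δ F isMax σw.1 τ.1 w := by
  haveI := stratNonempty hAv
  have h1 : gameValue δ Av F isMax w - ε < gameValue δ Av F isMax w := by linarith
  rw [gameValue] at h1
  exact exists_lt_of_lt_ciSup h1

lemma bellman_max (hδ0 : ∀ s a s', 0 ≤ δ s a s')
    (hδ1 : ∀ s, ∀ a ∈ Av s, ∑ s' : S, δ s a s' = 1)
    (hAv : ∀ s, (Av s).Nonempty)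
    (t : S) (a : A) (hmax : isMax t = true) (ha : a ∈ Av t) :
    ∑ t' : S, δ t a t' * gameValue δ Av F isMax t' ≤ gameValue δ Av F isMax t := by
  haveI := stratNonempty hAv
  by_cases htF : t ∈ F
  · calc ∑ t' : S, δ t a t' * gameValue δ Av F isMax t'
        ≤ ∑ t' : S, δ t a t' * 1 := Finset.sum_le_sum fun t' _ =>
          mul_le_mul_of_nonneg_left (gameValue_le_one hδ0 hδ1 hAv t') (hδ0 _ _ _)
      _ = 1 := by simp [hδ1 t a ha]
      _ = gameValue δ Av F isMax t := (gameValue_of_mem hAv htF).symm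
  · refine le_of_forall_pos_le_add ?_
    intro ε hε
    have hfam : ∀ w : S, ∃ σw : Strat Av,
        gameValue δ Av F isMax w - ε < ⨅ τ : Strat Av, pReach δ F isMax σw.1 τ.1 w :=
      fun w => exists_eps_opt hδ0 hδ1 hAv hε w
    choose σfam hσfam using hfam
    classical
    set σs : List (S × A) → S → A := fun h u =>
      match h with
      | [] => if u = t then a else (hAv u).choose
      | _ :: h' => (σfam (hd1 h' u)).1 h' u with hσsdef
    have hσsAv : ∀ h u, σs h u ∈ Av u := by
      intro h u
      cases h with
      | nil =>
        show (if u = t then a else (hAv u).choose) ∈ Av u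
        split_ifs with hu
        · subst hu; exact ha
        · exact (hAv u).choose_spec
      | cons p h' => exact (σfam (hd1 h' u)).2 h' u
    have key : ∀ τ : Strat Av,
        ∑ t' : S, δ t a t' * gameValue δ Av F isMax t' - ε ≤ pReach δ F isMax σs τ.1 t := by
      intro τ
      have hact : (if isMax t then σs [] t else τ.1 [] t) = a := by
        rw [hmax]
        show (if t = t then a else (hAv t).choose) = a
        rw [if_pos rfl]
      rw [pReach_step hδ0 hδ1 σs τ.1 hσsAv τ.2 t htF a hact]
      have hτ' : ∀ h u, (fun h' => τ.1 ((t, a) :: h')) h u ∈ Av u := fun h u => τ.2 _ u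
      have hcongr : ∀ t' : S,
          pReach δ F isMax (fun h' => σs ((t, a) :: h')) (fun h' => τ.1 ((t, a) :: h')) t'
            = pReach δ F isMax (σfam t').1 (fun h' => τ.1 ((t, a) :: h')) t' := by
        intro t'
        unfold pReach
        refine iSup_congr fun k => ?_
        exact reachB_congr _ _ _ _ k [] t' rfl rfl (fun a₀ h' u => rfl) (fun a₀ h' u => rfl)
      have hbound : ∀ t' : S, δ t a t' * (gameValue δ Av F isMax t' - ε)
          ≤ δ t a t' *
            pReach δ F isMax (fun h' => σs ((t, a) :: h')) (fun h' => τ.1 ((t, a) :: h')) t' := by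
        intro t'
        refine mul_le_mul_of_nonneg_left ?_ (hδ0 _ _ _)
        rw [hcongr t']
        refine le_trans (le_of_lt (hσfam t')) ?_
        exact ciInf_le (innerInf_bddBelow hδ0 hδ1 (σfam t') t')
          ⟨fun h u => τ.1 ((t, a) :: h) u, hτ'⟩
      have hsum : ∑ t' : S, δ t a t' * (gameValue δ Av F isMax t' - ε)
          = ∑ t' : S, δ t a t' * gameValue δ Av F isMax t' - ε := by
        simp only [mul_sub, Finset.sum_sub_distrib, ← Finset.sum_mul, hδ1 t a ha, one_mul]
      rw [← hsum]
      exact Finset.sum_le_sum fun t' _ => hbound t'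
    have h2 : ∑ t' : S, δ t a t' * gameValue δ Av F isMax t' - ε
        ≤ ⨅ τ : Strat Av, pReach δ F isMax σs τ.1 t := le_ciInf key
    have h3 : (⨅ τ : Strat Av, pReach δ F isMax σs τ.1 t) ≤ gameValue δ Av F isMax t :=
      le_ciSup (f := fun σ : Strat Av => ⨅ τ : Strat Av, pReach δ F isMax σ.1 τ.1 t)
        (gameValue_bddAbove hδ0 hδ1 hAv t) ⟨σs, hσsAv⟩
    linarith
lemma bellman_min (hδ0 : ∀ s a s', 0 ≤ δ s a s')
    (hδ1 : ∀ s, ∀ a ∈ Av s, ∑ s' : S, δ s a s' = 1)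
    (hAv : ∀ s, (Av s).Nonempty)
    (t : S) (hmin : isMax t = false) :
    ∃ b ∈ Av t, ∑ t' : S, δ t b t' * gameValue δ Av F isMax t' ≤ gameValue δ Av F isMax t := by
  haveI := stratNonempty hAv
  by_cases htF : t ∈ F
  · refine ⟨(hAv t).choose, (hAv t).choose_spec, ?_⟩
    calc ∑ t' : S, δ t (hAv t).choose t' * gameValue δ Av F isMax t'
        ≤ ∑ t' : S, δ t (hAv t).choose t' * 1 := Finset.sum_le_sum fun t' _ =>
          mul_le_mul_of_nonneg_left (gameValue_le_one hδ0 hδ1 hAv t') (hδ0 _ _ _)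
      _ = 1 := by simp [hδ1 t _ (hAv t).choose_spec]
      _ = gameValue δ Av F isMax t := (gameValue_of_mem hAv htF).symm
  · have hm : (Av t).inf' (hAv t) (fun b => ∑ t' : S, δ t b t' * gameValue δ Av F isMax t')
        ≤ gameValue δ Av F isMax t := by
      refine le_of_forall_pos_le_add ?_
      intro ε hε
      have hfam : ∀ w : S, ∃ σw : Strat Av,
          gameValue δ Av F isMax w - ε < ⨅ τ : Strat Av, pReach δ F isMax σw.1 τ.1 w :=
        fun w => exists_eps_opt hδ0 hδ1 hAv hε w
      choose σfam hσfam using hfam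
      set σs : List (S × A) → S → A := fun h u =>
        match h with
        | [] => (hAv u).choose
        | _ :: h' => (σfam (hd1 h' u)).1 h' u with hσsdef
      have hσsAv : ∀ h u, σs h u ∈ Av u := by
        intro h u
        cases h with
        | nil => exact (hAv u).choose_spec
        | cons p h' => exact (σfam (hd1 h' u)).2 h' u
      have key : ∀ τ : Strat Av,
          (Av t).inf' (hAv t) (fun b => ∑ t' : S, δ t b t' * gameValue δ Av F isMax t') - ε
            ≤ pReach δ F isMax σs τ.1 t := by
        intro τ
        have hbAv : τ.1 [] t ∈ Av t := τ.2 [] t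
        have hact : (if isMax t then σs [] t else τ.1 [] t) = τ.1 [] t := by rw [hmin]; simp
        set b : A := τ.1 [] t with hbdef
        rw [pReach_step hδ0 hδ1 σs τ.1 hσsAv τ.2 t htF b hact]
        have hτ' : ∀ h u, (fun h' => τ.1 ((t, b) :: h')) h u ∈ Av u := fun h u => τ.2 _ u
        have hcongr : ∀ t' : S,
            pReach δ F isMax (fun h' => σs ((t, b) :: h')) (fun h' => τ.1 ((t, b) :: h')) t'
              = pReach δ F isMax (σfam t').1 (fun h' => τ.1 ((t, b) :: h')) t' := by
          intro t'
          unfold pReach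
          refine iSup_congr fun k => ?_
          exact reachB_congr _ _ _ _ k [] t' rfl rfl (fun a₀ h' u => rfl) (fun a₀ h' u => rfl)
        have hbound : ∀ t' : S, δ t b t' * (gameValue δ Av F isMax t' - ε)
            ≤ δ t b t' *
              pReach δ F isMax (fun h' => σs ((t, b) :: h')) (fun h' => τ.1 ((t, b) :: h')) t' := by
          intro t'
          refine mul_le_mul_of_nonneg_left ?_ (hδ0 _ _ _)
          rw [hcongr t']
          refine le_trans (le_of_lt (hσfam t')) ?_
          exact ciInf_le (innerInf_bddBelow hδ0 hδ1 (σfam t') t')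
            ⟨fun h u => τ.1 ((t, b) :: h) u, hτ'⟩
        have hsum : ∑ t' : S, δ t b t' * (gameValue δ Av F isMax t' - ε)
            = ∑ t' : S, δ t b t' * gameValue δ Av F isMax t' - ε := by
          simp only [mul_sub, Finset.sum_sub_distrib, ← Finset.sum_mul, hδ1 t b hbAv, one_mul]
        have hinf : (Av t).inf' (hAv t) (fun b => ∑ t' : S, δ t b t' * gameValue δ Av F isMax t')
            ≤ ∑ t' : S, δ t b t' * gameValue δ Av F isMax t' := Finset.inf'_le _ hbAv
        have hfin := Finset.sum_le_sum fun t' (_ : t' ∈ Finset.univ) => hbound t'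
        rw [hsum] at hfin
        linarith
      have h2 := le_ciInf key
      have h3 : (⨅ τ : Strat Av, pReach δ F isMax σs τ.1 t) ≤ gameValue δ Av F isMax t :=
        le_ciSup (f := fun σ : Strat Av => ⨅ τ : Strat Av, pReach δ F isMax σ.1 τ.1 t)
          (gameValue_bddAbove hδ0 hδ1 hAv t) ⟨σs, hσsAv⟩
      linarith
    obtain ⟨b, hbAv, hbeq⟩ := Finset.exists_mem_eq_inf' (hAv t)
      (fun b => ∑ t' : S, δ t b t' * gameValue δ Av F isMax t')
    exact ⟨b, hbAv, by rw [← hbeq]; exact hm⟩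
/-- If `x` dominates the one-step Bellman operator (with Minimizer having some good
action at each state), then the game value is at most `x`. -/
lemma gameValue_le_of_prefixpoint (hδ0 : ∀ s a s', 0 ≤ δ s a s')
    (hδ1 : ∀ s, ∀ a ∈ Av s, ∑ s' : S, δ s a s' = 1)
    (hAv : ∀ s, (Av s).Nonempty) (x : S → ℝ)
    (hx0 : ∀ u, 0 ≤ x u) (hxF : ∀ u ∈ F, 1 ≤ x u)
    (hMax : ∀ u, u ∉ F → isMax u = true → ∀ a ∈ Av u, ∑ w : S, δ u a w * x w ≤ x u)
    (hMin : ∀ u, u ∉ F → isMax u = false → ∃ b ∈ Av u, ∑ w : S, δ u b w * x w ≤ x u) :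
    ∀ u, gameValue δ Av F isMax u ≤ x u := by
  haveI := stratNonempty hAv
  have hch : ∀ u : S, ∃ b, b ∈ Av u ∧
      (u ∉ F → isMax u = false → ∑ w : S, δ u b w * x w ≤ x u) := by
    intro u
    by_cases hF : u ∈ F
    · exact ⟨(hAv u).choose, (hAv u).choose_spec, fun h => absurd hF h⟩
    · cases hM : isMax u
      · obtain ⟨b, hb1, hb2⟩ := hMin u hF hM
        exact ⟨b, hb1, fun _ _ => hb2⟩
      · exact ⟨(hAv u).choose, (hAv u).choose_spec, fun _ h => by simp [hM] at h⟩
  choose τx hτx1 hτx2 using hch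
  set τX : Strat Av := ⟨fun _ u => τx u, fun _ u => hτx1 u⟩ with hτX
  have main : ∀ (σ : Strat Av) (k : ℕ) (h : List (S × A)) (u : S),
      reachB δ F isMax σ.1 τX.1 k h u ≤ x u := by
    intro σ k
    induction k with
    | zero =>
      intro h u
      rw [reachB]
      split_ifs with hF
      · exact hxF u hF
      · exact hx0 u
    | succ k ih =>
      intro h u
      rw [reachB]
      by_cases hF : u ∈ F
      · rw [if_pos hF]; exact hxF u hF
      · rw [if_neg hF]
        have hkey : ∀ act : A, act ∈ Av u → (∑ w : S, δ u act w * x w ≤ x u) →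
            ∑ w : S, δ u act w * reachB δ F isMax σ.1 τX.1 k (h ++ [(u, act)]) w ≤ x u := by
          intro act _ hact
          refine le_trans (Finset.sum_le_sum fun w _ =>
            mul_le_mul_of_nonneg_left (ih _ _) (hδ0 _ _ _)) hact
        cases hM : isMax u
        · rw [if_neg Bool.false_ne_true]
          exact hkey _ (hτx1 u) (hτx2 u hF hM)
        · rw [if_pos rfl]
          exact hkey _ (σ.2 h u) (hMax u hF hM _ (σ.2 h u))
  intro u
  rw [gameValue]
  refine ciSup_le fun σ => ?_
  refine le_trans (ciInf_le (innerInf_bddBelow hδ0 hδ1 σ u) τX) ?_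
  exact ciSup_le fun k => main σ k [] u

end Stmt10Aux


/-- Property (I) of Lemma 2 (soundness of the best-exit set): if `f ≥ V` pointwise and
`(s,a)` is a Maximizer state-action pair of the end component `T` whose support leaves `T`
and which maximizes `∑ δ(s,a,s')·f(s')` among all such exiting pairs, then
`∑ δ(s,a,s')·f(s') ≥ V(s)`. -/
theorem stmt10 {S A : Type} [Fintype S] [DecidableEq S]
    (δ : S → A → S → ℝ) (Av : S → Finset A) (isMax : S → Bool)
    (F : Finset S)
    (hδ0 : ∀ s a s', 0 ≤ δ s a s')
    (hδ1 : ∀ s, ∀ a ∈ Av s, ∑ s' : S, δ s a s' = 1)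
    (hAv : ∀ s, (Av s).Nonempty)
    (T : Finset S) (B : Finset (S × A))
    (hEC : IsEC δ Av T B)
    (hTF : ∀ s ∈ T, s ∉ F)
    (f : S → ℝ)
    (hf : ∀ s : S, gameValue δ Av F isMax s ≤ f s)
    (s : S) (a : A)
    (hsT : s ∈ T) (hmax : isMax s = true) (ha : a ∈ Av s)
    (hexit : ∃ t : S, δ s a t ≠ 0 ∧ t ∉ T)
    (hbest : ∀ s₁ ∈ T, ∀ a₁ ∈ Av s₁, isMax s₁ = true →
      (∃ t : S, δ s₁ a₁ t ≠ 0 ∧ t ∉ T) →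
      (∑ t : S, δ s₁ a₁ t * f t) ≤ ∑ t : S, δ s a t * f t) :
    gameValue δ Av F isMax s ≤ ∑ t : S, δ s a t * f t := by
  classical
  open Stmt10Aux in
  -- the best exit value with respect to the true game value
  set Dset : Set ℝ := {r | ∃ u b, u ∈ T ∧ isMax u = true ∧ b ∈ Av u ∧
      (∃ w, δ u b w ≠ 0 ∧ w ∉ T) ∧
      r = ∑ w : S, δ u b w * gameValue δ Av F isMax w} with hDsetdef
  have hDmem : (∑ w : S, δ s a w * gameValue δ Av F isMax w) ∈ Dset :=
    ⟨s, a, hsT, hmax, ha, hexit, rfl⟩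
  have hsum_le_one : ∀ (u : S) (b : A), b ∈ Av u →
      ∑ w : S, δ u b w * gameValue δ Av F isMax w ≤ 1 := by
    intro u b hb
    calc ∑ w : S, δ u b w * gameValue δ Av F isMax w
        ≤ ∑ w : S, δ u b w * 1 := Finset.sum_le_sum fun w _ =>
          mul_le_mul_of_nonneg_left (Stmt10Aux.gameValue_le_one hδ0 hδ1 hAv w) (hδ0 _ _ _)
      _ = 1 := by simp [hδ1 u b hb]
  have hsum_nonneg : ∀ (u : S) (b : A),
      0 ≤ ∑ w : S, δ u b w * gameValue δ Av F isMax w := fun u b =>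
    Finset.sum_nonneg fun w _ =>
      mul_nonneg (hδ0 _ _ _) (Stmt10Aux.gameValue_nonneg hδ0 hδ1 hAv w)
  have hDbdd : BddAbove Dset := by
    refine ⟨1, ?_⟩
    rintro r ⟨u, b, hu, hm, hb, hex, rfl⟩
    exact hsum_le_one u b hb
  set D : ℝ := sSup Dset with hDdef
  have hD0 : 0 ≤ D := le_trans (hsum_nonneg s a) (le_csSup hDbdd hDmem)
  have hDC : D ≤ ∑ t' : S, δ s a t' * f t' := by
    refine csSup_le ⟨_, hDmem⟩ ?_
    rintro r ⟨u, b, hu, hm, hb, hex, rfl⟩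
    calc ∑ w : S, δ u b w * gameValue δ Av F isMax w
        ≤ ∑ w : S, δ u b w * f w := Finset.sum_le_sum fun w _ =>
          mul_le_mul_of_nonneg_left (hf w) (hδ0 _ _ _)
      _ ≤ ∑ t' : S, δ s a t' * f t' := hbest u hu b hb hm hex
  -- every state of T has an action staying in T
  have hBact : ∀ u ∈ T, ∃ b ∈ Av u, ∀ w, δ u b w ≠ 0 → w ∈ T := by
    obtain ⟨p, hp⟩ := hEC.1
    have hp1 := hEC.2.1 p hp
    intro u hu
    have hconn := hEC.2.2 u hu p.1 hp1.1
    rcases Relation.ReflTransGen.cases_head hconn with heq | ⟨c, ⟨b, hbB, _⟩, _⟩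
    · rw [heq]
      exact ⟨p.2, hp1.2.1, hp1.2.2⟩
    · have h2 := hEC.2.1 (u, b) hbB
      exact ⟨b, h2.2.1, h2.2.2⟩
  -- the dominating prefixpoint
  set x : S → ℝ := fun u =>
    if u ∈ T then min (gameValue δ Av F isMax u) D else gameValue δ Av F isMax u with hxdef
  have hxT : ∀ u ∈ T, x u = min (gameValue δ Av F isMax u) D := by
    intro u hu; rw [hxdef]; simp only [if_pos hu]
  have hxN : ∀ u, u ∉ T → x u = gameValue δ Av F isMax u := by
    intro u hu; rw [hxdef]; simp only [if_neg hu]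
  have hxleV : ∀ u, x u ≤ gameValue δ Av F isMax u := by
    intro u
    by_cases hu : u ∈ T
    · rw [hxT u hu]; exact min_le_left _ _
    · rw [hxN u hu]
  have hxleD : ∀ u ∈ T, x u ≤ D := by
    intro u hu; rw [hxT u hu]; exact min_le_right _ _
  have hsum_x_le_V : ∀ (u : S) (b : A),
      ∑ w : S, δ u b w * x w ≤ ∑ w : S, δ u b w * gameValue δ Av F isMax w := fun u b =>
    Finset.sum_le_sum fun w _ => mul_le_mul_of_nonneg_left (hxleV w) (hδ0 _ _ _)
  have hsum_x_le_D : ∀ (u : S) (b : A), b ∈ Av u → (∀ w, δ u b w ≠ 0 → w ∈ T) →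
      ∑ w : S, δ u b w * x w ≤ D := by
    intro u b hb hsup
    calc ∑ w : S, δ u b w * x w
        ≤ ∑ w : S, δ u b w * D := by
          refine Finset.sum_le_sum fun w _ => ?_
          by_cases hδw : δ u b w = 0
          · rw [hδw]; simp
          · exact mul_le_mul_of_nonneg_left (hxleD w (hsup w hδw)) (hδ0 _ _ _)
      _ = D := by rw [← Finset.sum_mul, hδ1 u b hb, one_mul]
  have hx0 : ∀ u, 0 ≤ x u := by
    intro u
    by_cases hu : u ∈ T
    · rw [hxT u hu]
      exact le_min (Stmt10Aux.gameValue_nonneg hδ0 hδ1 hAv u) hD0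
    · rw [hxN u hu]; exact Stmt10Aux.gameValue_nonneg hδ0 hδ1 hAv u
  have hxF : ∀ u ∈ F, 1 ≤ x u := by
    intro u huF
    have huT : u ∉ T := fun h => hTF u h huF
    rw [hxN u huT, Stmt10Aux.gameValue_of_mem hAv huF]
  have hMax : ∀ u, u ∉ F → isMax u = true → ∀ a₁ ∈ Av u,
      ∑ w : S, δ u a₁ w * x w ≤ x u := by
    intro u _ hM a₁ ha₁
    by_cases huT : u ∈ T
    · rw [hxT u huT]
      refine le_min ?_ ?_
      · exact le_trans (hsum_x_le_V u a₁)
          (Stmt10Aux.bellman_max hδ0 hδ1 hAv u a₁ hM ha₁)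
      · by_cases hex : ∃ w, δ u a₁ w ≠ 0 ∧ w ∉ T
        · exact le_trans (hsum_x_le_V u a₁)
            (le_csSup hDbdd ⟨u, a₁, huT, hM, ha₁, hex, rfl⟩)
        · push_neg at hex
          exact hsum_x_le_D u a₁ ha₁ hex
    · rw [hxN u huT]
      exact le_trans (hsum_x_le_V u a₁)
        (Stmt10Aux.bellman_max hδ0 hδ1 hAv u a₁ hM ha₁)
  have hMin : ∀ u, u ∉ F → isMax u = false →
      ∃ b ∈ Av u, ∑ w : S, δ u b w * x w ≤ x u := by
    intro u _ hM
    by_cases huT : u ∈ T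
    · by_cases hVD : gameValue δ Av F isMax u ≤ D
      · obtain ⟨b, hb, hbV⟩ := Stmt10Aux.bellman_min hδ0 hδ1 hAv u hM
        refine ⟨b, hb, ?_⟩
        rw [hxT u huT, min_eq_left hVD]
        exact le_trans (hsum_x_le_V u b) hbV
      · obtain ⟨b, hb, hsup⟩ := hBact u huT
        refine ⟨b, hb, ?_⟩
        rw [hxT u huT, min_eq_right (le_of_not_ge hVD)]
        exact hsum_x_le_D u b hb hsup
    · obtain ⟨b, hb, hbV⟩ := Stmt10Aux.bellman_min hδ0 hδ1 hAv u hM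
      refine ⟨b, hb, ?_⟩
      rw [hxN u huT]
      exact le_trans (hsum_x_le_V u b) hbV
  have hVx := Stmt10Aux.gameValue_le_of_prefixpoint hδ0 hδ1 hAv x hx0 hxF hMax hMin
  calc gameValue δ Av F isMax s ≤ x s := hVx s
    _ ≤ D := hxleD s hsT
    _ ≤ ∑ t' : S, δ s a t' * f t' := hDC
end

section
/- Let v : S → [0,1] on a finite state space of a stochastic game without end components among the unknown states S?, i.e., under every pair of strategies, from every s ∈ S? the play leaves S? with probability 1. Then for every pair of strategies σ, τ, P_s^{σ,τ}(□^{≤k} S?) → 0 as k → ∞, uniformly over s ∈ S?; in particular there exist k₀ and c < 1 with P_s^{σ,τ}(□^{≤k₀} S?) ≤ c for all s, σ, τ, and hence P_s^{σ,τ}(□^{≤ mk₀} S?) ≤ c^m. -/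
section Aux

variable {S A : Type} [Fintype S] [DecidableEq S]

/-- Worst-case staying probability over all available actions. -/
noncomputable def gfun (δ : S → A → S → ℝ) (Av : S → Finset A) (SQ : Finset S)
    (hAv : ∀ s, (Av s).Nonempty) : ℕ → S → ℝ
  | 0, s => if s ∈ SQ then 1 else 0
  | k + 1, s =>
      if s ∈ SQ then
        (Av s).sup' (hAv s) (fun a => ∑ s' : S, δ s a s' * gfun δ Av SQ hAv k s')
      else 0

variable {δ : S → A → S → ℝ} {Av : S → Finset A} {isMax : S → Bool} {SQ : Finset S}

lemma stay_zero (σ τ : List (S × A) → S → A) (k : ℕ) (h : List (S × A)) {s : S}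
    (hs : s ∉ SQ) : stayB δ SQ isMax σ τ k h s = 0 := by
  cases k with
  | zero => simp [stayB, hs]
  | succ k => simp [stayB, hs]

lemma stay_nonneg (hδ0 : ∀ s a s', 0 ≤ δ s a s')
    (σ τ : List (S × A) → S → A) (k : ℕ) :
    ∀ (h : List (S × A)) (s : S), 0 ≤ stayB δ SQ isMax σ τ k h s := by
  induction k with
  | zero =>
      intro h s; simp only [stayB]; split <;> norm_num
  | succ k ih =>
      intro h s
      simp only [stayB]
      split
      · exact Finset.sum_nonneg fun s' _ => mul_nonneg (hδ0 _ _ _) (ih _ _)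
      · exact le_refl 0

lemma g_nonneg (hδ0 : ∀ s a s', 0 ≤ δ s a s') (hAv : ∀ s, (Av s).Nonempty)
    (k : ℕ) (s : S) : 0 ≤ gfun δ Av SQ hAv k s := by
  induction k generalizing s with
  | zero => simp only [gfun]; split <;> norm_num
  | succ k ih =>
      simp only [gfun]
      split
      · obtain ⟨a, ha⟩ := hAv s
        exact le_trans (Finset.sum_nonneg fun s' _ => mul_nonneg (hδ0 _ _ _) (ih _))
          (Finset.le_sup' (fun a => ∑ s' : S, δ s a s' * gfun δ Av SQ hAv k s') ha)
      · exact le_refl 0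

lemma g_le_one (hδ0 : ∀ s a s', 0 ≤ δ s a s')
    (hδ1 : ∀ s, ∀ a ∈ Av s, ∑ s' : S, δ s a s' = 1) (hAv : ∀ s, (Av s).Nonempty)
    (k : ℕ) (s : S) : gfun δ Av SQ hAv k s ≤ 1 := by
  induction k generalizing s with
  | zero => simp only [gfun]; split <;> norm_num
  | succ k ih =>
      simp only [gfun]
      split
      · apply Finset.sup'_le
        intro a ha
        calc ∑ s' : S, δ s a s' * gfun δ Av SQ hAv k s'
            ≤ ∑ s' : S, δ s a s' * 1 :=
              Finset.sum_le_sum fun s' _ => mul_le_mul_of_nonneg_left (ih s') (hδ0 _ _ _)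
          _ = 1 := by simpa using hδ1 s a ha
      · norm_num

lemma g_anti (hδ0 : ∀ s a s', 0 ≤ δ s a s')
    (hδ1 : ∀ s, ∀ a ∈ Av s, ∑ s' : S, δ s a s' = 1) (hAv : ∀ s, (Av s).Nonempty) :
    ∀ k s, gfun δ Av SQ hAv (k + 1) s ≤ gfun δ Av SQ hAv k s := by
  intro k
  induction k with
  | zero =>
      intro s
      simp only [gfun]
      split
      · next hs =>
          apply Finset.sup'_le
          intro a ha
          calc ∑ s' : S, δ s a s' * (if s' ∈ SQ then (1:ℝ) else 0)
              ≤ ∑ s' : S, δ s a s' * 1 :=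
                Finset.sum_le_sum fun s' _ => by
                  apply mul_le_mul_of_nonneg_left _ (hδ0 _ _ _)
                  split <;> norm_num
            _ = 1 := by simpa using hδ1 s a ha
      · exact le_refl 0
  | succ k ih =>
      intro s
      simp only [gfun]
      split
      · apply Finset.sup'_le
        intro a ha
        calc ∑ s' : S, δ s a s' * gfun δ Av SQ hAv (k + 1) s'
            ≤ ∑ s' : S, δ s a s' * gfun δ Av SQ hAv k s' :=
              Finset.sum_le_sum fun s' _ => mul_le_mul_of_nonneg_left (ih s') (hδ0 _ _ _)
          _ ≤ _ := Finset.le_sup' (fun a => ∑ s' : S, δ s a s' * gfun δ Av SQ hAv k s') ha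
      · exact le_refl 0

lemma g_antitone (hδ0 : ∀ s a s', 0 ≤ δ s a s')
    (hδ1 : ∀ s, ∀ a ∈ Av s, ∑ s' : S, δ s a s' = 1) (hAv : ∀ s, (Av s).Nonempty)
    {j k : ℕ} (hjk : j ≤ k) (s : S) :
    gfun δ Av SQ hAv k s ≤ gfun δ Av SQ hAv j s := by
  have := antitone_nat_of_succ_le
    (f := fun k => gfun δ Av SQ hAv k s) (fun n => g_anti hδ0 hδ1 hAv n s) hjk
  exact this

lemma stay_le_g (hδ0 : ∀ s a s', 0 ≤ δ s a s') (hAv : ∀ s, (Av s).Nonempty)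
    (σ τ : List (S × A) → S → A)
    (hσ : ∀ h s, σ h s ∈ Av s) (hτ : ∀ h s, τ h s ∈ Av s) (k : ℕ) :
    ∀ (h : List (S × A)) (s : S), stayB δ SQ isMax σ τ k h s ≤ gfun δ Av SQ hAv k s := by
  induction k with
  | zero => intro h s; simp [stayB, gfun]
  | succ k ih =>
      intro h s
      simp only [stayB, gfun]
      split
      · have haAv : (if isMax s then σ h s else τ h s) ∈ Av s := by
          split
          · exact hσ h s
          · exact hτ h s
        calc ∑ s' : S, δ s (if isMax s then σ h s else τ h s) s' *
                stayB δ SQ isMax σ τ k (h ++ [(s, if isMax s then σ h s else τ h s)]) s'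
            ≤ ∑ s' : S, δ s (if isMax s then σ h s else τ h s) s' * gfun δ Av SQ hAv k s' :=
              Finset.sum_le_sum fun s' _ =>
                mul_le_mul_of_nonneg_left (ih _ s') (hδ0 _ _ _)
          _ ≤ _ := Finset.le_sup' (fun a => ∑ s' : S, δ s a s' * gfun δ Av SQ hAv k s') haAv
      · exact le_refl 0

open Classical in
/-- States from which the worst-case staying probability is always 1. -/
noncomputable def Tset (δ : S → A → S → ℝ) (Av : S → Finset A) (SQ : Finset S)
    (hAv : ∀ s, (Av s).Nonempty) : Finset S :=
  SQ.filter (fun s => ∀ k, gfun δ Av SQ hAv k s = 1)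

lemma mem_Tset {hAv : ∀ s, (Av s).Nonempty} {s : S} :
    s ∈ Tset δ Av SQ hAv ↔ s ∈ SQ ∧ ∀ k, gfun δ Av SQ hAv k s = 1 := by
  classical
  simp [Tset]

lemma T_step (hδ0 : ∀ s a s', 0 ≤ δ s a s')
    (hδ1 : ∀ s, ∀ a ∈ Av s, ∑ s' : S, δ s a s' = 1) (hAv : ∀ s, (Av s).Nonempty)
    {s : S} (hs : s ∈ Tset δ Av SQ hAv) :
    ∃ a ∈ Av s, ∀ s', 0 < δ s a s' → s' ∈ Tset δ Av SQ hAv := by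
  obtain ⟨hsSQ, hg⟩ := (mem_Tset (hAv := hAv)).1 hs
  have key : ∃ a ∈ Av s, ∀ k, ∑ s' : S, δ s a s' * gfun δ Av SQ hAv k s' = 1 := by
    by_contra hcon
    push_neg at hcon
    have hlt : ∀ a : A, ∃ k, a ∈ Av s → ∑ s' : S, δ s a s' * gfun δ Av SQ hAv k s' < 1 := by
      intro a
      by_cases ha : a ∈ Av s
      · obtain ⟨k, hk⟩ := hcon a ha
        refine ⟨k, fun _ => lt_of_le_of_ne ?_ hk⟩
        calc ∑ s' : S, δ s a s' * gfun δ Av SQ hAv k s'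
            ≤ ∑ s' : S, δ s a s' * 1 :=
              Finset.sum_le_sum fun s' _ =>
                mul_le_mul_of_nonneg_left (g_le_one hδ0 hδ1 hAv k s') (hδ0 _ _ _)
          _ = 1 := by simpa using hδ1 s a ha
      · exact ⟨0, fun h => absurd h ha⟩
    choose K hK using hlt
    set N := (Av s).sup K with hN
    have h1 : gfun δ Av SQ hAv (N + 1) s < 1 := by
      simp only [gfun, if_pos hsSQ]
      rw [Finset.sup'_lt_iff]
      intro a ha
      calc ∑ s' : S, δ s a s' * gfun δ Av SQ hAv N s'
          ≤ ∑ s' : S, δ s a s' * gfun δ Av SQ hAv (K a) s' :=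
            Finset.sum_le_sum fun s' _ =>
              mul_le_mul_of_nonneg_left
                (g_antitone hδ0 hδ1 hAv (Finset.le_sup ha) s') (hδ0 _ _ _)
        _ < 1 := hK a ha
    exact absurd (hg (N + 1)) (ne_of_lt h1)
  obtain ⟨a, haAv, hsum⟩ := key
  refine ⟨a, haAv, fun s' hpos => ?_⟩
  have heach : ∀ k, gfun δ Av SQ hAv k s' = 1 := by
    intro k
    have h1 : ∑ x : S, δ s a x * gfun δ Av SQ hAv k x = ∑ x : S, δ s a x * 1 := by
      rw [hsum k]
      simpa using (hδ1 s a haAv).symm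
    have hle : ∀ x ∈ Finset.univ, δ s a x * gfun δ Av SQ hAv k x ≤ δ s a x * 1 :=
      fun x _ => mul_le_mul_of_nonneg_left (g_le_one hδ0 hδ1 hAv k x) (hδ0 _ _ _)
    have h2 := (Finset.sum_eq_sum_iff_of_le hle).1 h1 s' (Finset.mem_univ s')
    have h3 := mul_left_cancel₀ (ne_of_gt hpos) h2
    simpa using h3
  have hs'SQ : s' ∈ SQ := by
    by_contra hx
    have := heach 0
    simp [gfun, hx] at this
  exact (mem_Tset (hAv := hAv)).2 ⟨hs'SQ, heach⟩

lemma stay_one (hδ1 : ∀ s, ∀ a ∈ Av s, ∑ s' : S, δ s a s' = 1)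
    (hAv : ∀ s, (Av s).Nonempty) (hδ0 : ∀ s a s', 0 ≤ δ s a s')
    (f : S → A) (hf2 : ∀ s ∈ Tset δ Av SQ hAv, f s ∈ Av s)
    (hf3 : ∀ s ∈ Tset δ Av SQ hAv, ∀ s', 0 < δ s (f s) s' → s' ∈ Tset δ Av SQ hAv)
    (k : ℕ) :
    ∀ (h : List (S × A)) (s : S), s ∈ Tset δ Av SQ hAv →
      stayB δ SQ isMax (fun _ s => f s) (fun _ s => f s) k h s = 1 := by
  induction k with
  | zero =>
      intro h s hs
      have hsSQ : s ∈ SQ := ((mem_Tset (hAv := hAv)).1 hs).1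
      simp [stayB, hsSQ]
  | succ k ih =>
      intro h s hs
      have hsSQ : s ∈ SQ := ((mem_Tset (hAv := hAv)).1 hs).1
      simp only [stayB, if_pos hsSQ, ite_self]
      have : ∀ s' : S,
          δ s (f s) s' * stayB δ SQ isMax (fun _ s => f s) (fun _ s => f s) k
            (h ++ [(s, f s)]) s' = δ s (f s) s' := by
        intro s'
        rcases lt_or_eq_of_le (hδ0 s (f s) s') with hpos | hzero
        · rw [ih _ s' (hf3 s hs s' hpos), mul_one]
        · rw [← hzero]; simp
      rw [Finset.sum_congr rfl (fun s' _ => this s')]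
      exact hδ1 s (f s) (hf2 s hs)

lemma stay_comp (hδ0 : ∀ s a s', 0 ≤ δ s a s')
    (σ τ : List (S × A) → S → A) {c : ℝ} (k : ℕ)
    (hc : ∀ h s, s ∈ SQ → stayB δ SQ isMax σ τ k h s ≤ c) :
    ∀ (n : ℕ) (h : List (S × A)) (s : S),
      stayB δ SQ isMax σ τ (n + k) h s ≤ stayB δ SQ isMax σ τ n h s * c := by
  intro n
  induction n with
  | zero =>
      intro h s
      simp only [Nat.zero_add]
      by_cases hs : s ∈ SQ
      · simpa [stayB, hs] using hc h s hs
      · simp [stay_zero σ τ k h hs, stay_zero σ τ 0 h hs]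
  | succ n ih =>
      intro h s
      have hnk : n + 1 + k = (n + k) + 1 := by omega
      rw [hnk]
      by_cases hs : s ∈ SQ
      · simp only [stayB, if_pos hs, Finset.sum_mul]
        exact Finset.sum_le_sum fun s' _ => by
          rw [mul_assoc]
          exact mul_le_mul_of_nonneg_left (ih _ s') (hδ0 _ _ _)
      · simp [stayB, hs]

end Aux

/-- In a finite game whose unknown states `S?` contain no end components — i.e. under every
pair of strategies and from every `s ∈ S?` the play leaves `S?` with probability 1 — the
staying probabilities vanish uniformly: there are `k₀` and `c < 1` with
`P_s^{σ,τ}(□^{≤k₀}S?) ≤ c` for all `s ∈ S?` and all strategies, and hence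
`P_s^{σ,τ}(□^{≤ m·k₀}S?) ≤ cᵐ`. -/
theorem stmt19 {S A : Type} [Fintype S] [DecidableEq S]
    (δ : S → A → S → ℝ) (Av : S → Finset A) (isMax : S → Bool)
    (SQ : Finset S)
    (hδ0 : ∀ s a s', 0 ≤ δ s a s')
    (hδ1 : ∀ s, ∀ a ∈ Av s, ∑ s' : S, δ s a s' = 1)
    (hAv : ∀ s, (Av s).Nonempty)
    (hleave : ∀ σ τ : Strat Av, ∀ s ∈ SQ,
      Filter.Tendsto (fun k => stayB δ SQ isMax σ.1 τ.1 k [] s)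
        Filter.atTop (nhds 0)) :
    ∃ k₀ : ℕ, ∃ c : ℝ, 0 ≤ c ∧ c < 1 ∧
      (∀ σ τ : Strat Av, ∀ s ∈ SQ, stayB δ SQ isMax σ.1 τ.1 k₀ [] s ≤ c) ∧
      (∀ σ τ : Strat Av, ∀ s ∈ SQ, ∀ m : ℕ,
        stayB δ SQ isMax σ.1 τ.1 (m * k₀) [] s ≤ c ^ m) := by
  classical
  by_cases hSQ : SQ.Nonempty
  · -- Step 1: every state of `SQ` eventually has worst-case staying probability < 1
    have hA : ∀ s : S, ∃ k, s ∈ SQ → gfun δ Av SQ hAv k s < 1 := by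
      intro s
      by_cases hsSQ : s ∈ SQ
      · by_contra hcon
        push_neg at hcon
        have hT : s ∈ Tset δ Av SQ hAv := by
          exact (mem_Tset (hAv := hAv)).2 ⟨hsSQ, fun k =>
            le_antisymm (g_le_one hδ0 hδ1 hAv k s) (hcon k).2⟩
        -- build a stationary strategy staying in `Tset` forever
        have hchoice : ∀ t : S, ∃ a : A, a ∈ Av t ∧
            (t ∈ Tset δ Av SQ hAv → ∀ t', 0 < δ t a t' → t' ∈ Tset δ Av SQ hAv) := by
          intro t
          by_cases ht : t ∈ Tset δ Av SQ hAv
          · obtain ⟨a, ha, hstep⟩ := T_step hδ0 hδ1 hAv ht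
            exact ⟨a, ha, fun _ => hstep⟩
          · exact ⟨(hAv t).choose, (hAv t).choose_spec, fun h => absurd h ht⟩
        choose f hfAv hfT using hchoice
        set σ₀ : Strat Av := ⟨fun _ t => f t, fun _ t => hfAv t⟩ with hσ₀
        have hone : ∀ k, stayB δ SQ isMax σ₀.1 σ₀.1 k [] s = 1 := fun k =>
          stay_one hδ1 hAv hδ0 f (fun t ht => hfAv t) (fun t ht => hfT t ht) k [] s hT
        have htend : Filter.Tendsto (fun _ : ℕ => (1 : ℝ)) Filter.atTop (nhds 0) :=
          (hleave σ₀ σ₀ s hsSQ).congr (fun k => hone k)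
        have : (0 : ℝ) = 1 := tendsto_nhds_unique htend tendsto_const_nhds
        norm_num at this
      · exact ⟨0, fun h => absurd h hsSQ⟩
    choose K hK using hA
    set k₀ := SQ.sup K with hk₀
    have hgk₀ : ∀ s ∈ SQ, gfun δ Av SQ hAv k₀ s < 1 := fun s hs =>
      lt_of_le_of_lt (g_antitone hδ0 hδ1 hAv (Finset.le_sup hs) s) (hK s hs)
    set c := SQ.sup' hSQ (gfun δ Av SQ hAv k₀) with hc
    have hc0 : 0 ≤ c :=
      le_trans (g_nonneg hδ0 hAv k₀ hSQ.choose) (Finset.le_sup' _ hSQ.choose_spec)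
    have hc1 : c < 1 := (Finset.sup'_lt_iff hSQ).2 hgk₀
    have hbound : ∀ σ τ : Strat Av, ∀ (h : List (S × A)) (s : S), s ∈ SQ →
        stayB δ SQ isMax σ.1 τ.1 k₀ h s ≤ c := by
      intro σ τ h s hs
      exact le_trans (stay_le_g hδ0 hAv σ.1 τ.1 σ.2 τ.2 k₀ h s)
        (Finset.le_sup' _ hs)
    refine ⟨k₀, c, hc0, hc1, fun σ τ s hs => hbound σ τ [] s hs, ?_⟩
    intro σ τ s hs m
    induction m with
    | zero =>
        simp [stayB, hs]
    | succ m ih =>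
        have hm : (m + 1) * k₀ = m * k₀ + k₀ := by ring
        rw [hm]
        calc stayB δ SQ isMax σ.1 τ.1 (m * k₀ + k₀) [] s
            ≤ stayB δ SQ isMax σ.1 τ.1 (m * k₀) [] s * c :=
              stay_comp hδ0 σ.1 τ.1 k₀ (fun h t ht => hbound σ τ h t ht) (m * k₀) [] s
          _ ≤ c ^ m * c := mul_le_mul_of_nonneg_right ih hc0
          _ = c ^ (m + 1) := (pow_succ c m).symm
  · -- `SQ` empty: everything is vacuous
    rw [Finset.not_nonempty_iff_eq_empty] at hSQ
    subst hSQ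
    exact ⟨0, 0, le_refl 0, by norm_num, fun σ τ s hs => absurd hs (by simp),
      fun σ τ s hs => absurd hs (by simp)⟩
end
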